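/- arXiv:2411.16477 — 4 statements merged into one kernel-verified Lean document; each statement's English description precedes it below -/
import Mathlib

section
/- In the node-activation model, the entrywise expectation of the product of the random degree and adjacency matrices satisfies E[D_1 A_1] = p³ (D_G − I) A_G + p² A_G, where I is the N×N identity matrix. -/
open MeasureTheory ProbabilityTheory Matrix

noncomputable section

/-- The real-valued indicator of a Boolean. -/
def ind (b : Bool) : ℝ := if b then 1 else 0

/-- Adjacency matrix of the random induced subgraph: edge {i,j} of `G` is kept
iff both endpoints are active. -/
def A1 {N : ℕ} (G : SimpleGraph (Fin N)) [DecidableRel G.Adj] (X : Fin N → Bool) :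
    Matrix (Fin N) (Fin N) ℝ :=
  Matrix.of fun i j => (G.adjMatrix ℝ) i j * ind (X i) * ind (X j)

/-- Diagonal degree matrix of the random induced subgraph. -/
def D1 {N : ℕ} (G : SimpleGraph (Fin N)) [DecidableRel G.Adj] (X : Fin N → Bool) :
    Matrix (Fin N) (Fin N) ℝ :=
  Matrix.diagonal fun i => ∑ j, A1 G X i j

/-- Laplacian of the random induced subgraph. -/
def L1 {N : ℕ} (G : SimpleGraph (Fin N)) [DecidableRel G.Adj] (X : Fin N → Bool) :
    Matrix (Fin N) (Fin N) ℝ :=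
  D1 G X - A1 G X

/-!
Since indicators are idempotent, `(D₁ A₁)ᵢⱼ = aᵢⱼ ∑_{k ∼ i} xᵢ xₖ xⱼ`, where each product is
really the product of the indicators over the set `{i, k, j}`. By independence such a product
has expectation `p ^ #{i, k, j}`: this is `p²` for `k = j` and `p³` for the `deg i - 1` other
neighbours `k` of `i`.
-/

lemma ind_mul_self (b : Bool) : ind b * ind b = ind b := by cases b <;> simp [ind]

lemma ind_eq_indicator {Ω : Type*} (f : Ω → Bool) (ω : Ω) :
    ind (f ω) = (f ⁻¹' {true}).indicator 1 ω := by
  cases h : f ω <;> simp [ind, h]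

lemma prod_ind_eq_indicator {ι Ω : Type*} (X : ι → Ω → Bool) (S : Finset ι) (ω : Ω) :
    ∏ s ∈ S, ind (X s ω) = (⋂ s ∈ S, X s ⁻¹' {true}).indicator 1 ω := by
  simp_rw [ind_eq_indicator, prod_indicator_const_apply, one_pow]

lemma prod_ind_insert {ι : Type*} [DecidableEq ι] (x : ι → Bool) (a : ι) (S : Finset ι) :
    ∏ s ∈ insert a S, ind (x s) = ind (x a) * ∏ s ∈ S, ind (x s) := by
  by_cases ha : a ∈ S
  · rw [Finset.insert_eq_of_mem ha, ← Finset.mul_prod_erase S _ ha, ← mul_assoc, ind_mul_self]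
  · exact Finset.prod_insert ha

section Bernoulli

variable {ι Ω : Type*} [MeasurableSpace Ω] {μ : Measure Ω} {X : ι → Ω → Bool}

lemma integrable_prod_ind [IsFiniteMeasure μ] (hmeas : ∀ i, Measurable (X i)) (S : Finset ι) :
    Integrable (fun ω => ∏ s ∈ S, ind (X s ω)) μ := by
  simp_rw [prod_ind_eq_indicator]
  exact (integrable_const 1).indicator
    (S.measurableSet_biInter fun s _ => hmeas s (measurableSet_singleton true))

lemma integral_prod_ind {p : ℝ} (hp0 : 0 ≤ p) (hmeas : ∀ i, Measurable (X i))
    (hindep : iIndepFun X μ) (hbern : ∀ i, μ {ω | X i ω = true} = ENNReal.ofReal p)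
    (S : Finset ι) : ∫ ω, ∏ s ∈ S, ind (X s ω) ∂μ = p ^ S.card := by
  simp_rw [prod_ind_eq_indicator]
  rw [integral_indicator_one
      (S.measurableSet_biInter fun s _ => hmeas s (measurableSet_singleton true)),
    measureReal_def, hindep.measure_inter_preimage_eq_mul S fun _ _ => measurableSet_singleton _]
  simp [Set.preimage, hbern, ENNReal.toReal_ofReal hp0]

end Bernoulli

section RandomSubgraph

variable {N : ℕ} (G : SimpleGraph (Fin N)) [DecidableRel G.Adj]

lemma sum_A1_apply (x : Fin N → Bool) (i : Fin N) :
    ∑ k, A1 G x i k = ∑ k ∈ G.neighborFinset i, ind (x i) * ind (x k) := by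
  simp [A1, SimpleGraph.adjMatrix_apply, Finset.sum_ite, SimpleGraph.neighborFinset_eq_filter]

lemma D1_mul_A1_apply (x : Fin N → Bool) (i j : Fin N) :
    (D1 G x * A1 G x) i j =
      G.adjMatrix ℝ i j * ∑ k ∈ G.neighborFinset i, ∏ s ∈ {i, k, j}, ind (x s) := by
  rw [D1, diagonal_mul, sum_A1_apply, Finset.sum_mul, Finset.mul_sum]
  refine Finset.sum_congr rfl fun k _ => ?_
  simp only [A1, of_apply, prod_ind_insert, Finset.prod_singleton]
  linear_combination (G.adjMatrix ℝ i j * ind (x k) * ind (x j)) * ind_mul_self (x i)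

lemma adjMatrix_mul_sum_pow_card (p : ℝ) (i j : Fin N) :
    G.adjMatrix ℝ i j * ∑ k ∈ G.neighborFinset i, p ^ ({i, k, j} : Finset (Fin N)).card =
      p ^ 3 * (((G.degree i : ℝ) - 1) * G.adjMatrix ℝ i j) + p ^ 2 * G.adjMatrix ℝ i j := by
  by_cases hij : G.Adj i j
  swap
  · simp [hij]
  have hcard : ∀ k ∈ G.neighborFinset i,
      p ^ ({i, k, j} : Finset (Fin N)).card = p ^ 3 + if k = j then p ^ 2 - p ^ 3 else 0 := by
    intro k hk
    rw [SimpleGraph.mem_neighborFinset] at hk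
    split_ifs with hkj
    · subst hkj; simp [hij.ne]
    · simp [Finset.card_insert_of_notMem, hk.ne, hij.ne, hkj]
  rw [Finset.sum_congr rfl hcard, Finset.sum_add_distrib, Finset.sum_ite_eq',
    if_pos ((G.mem_neighborFinset i j).2 hij)]
  rw [Finset.sum_const, G.card_neighborFinset_eq_degree, nsmul_eq_mul, G.adjMatrix_apply,
    if_pos hij]
  ring

lemma degMatrix_sub_one_mul_adjMatrix_apply (i j : Fin N) :
    ((G.degMatrix ℝ - 1) * G.adjMatrix ℝ) i j =
      ((G.degree i : ℝ) - 1) * G.adjMatrix ℝ i j := by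
  rw [SimpleGraph.degMatrix, ← diagonal_one, diagonal_sub, diagonal_mul]

end RandomSubgraph

theorem stmt6_general {N : ℕ} (G : SimpleGraph (Fin N)) [DecidableRel G.Adj]
    {Ω : Type*} [MeasurableSpace Ω] (μ : Measure Ω) [IsProbabilityMeasure μ]
    (p : ℝ) (hp0 : 0 ≤ p)
    (X : Fin N → Ω → Bool)
    (hmeas : ∀ i, Measurable (X i))
    (hindep : iIndepFun X μ)
    (hbern : ∀ i, μ {ω | X i ω = true} = ENNReal.ofReal p) :
    ∀ i j, ∫ ω, (D1 G (fun v => X v ω) * A1 G (fun v => X v ω)) i j ∂μ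
      = (p ^ 3 • ((G.degMatrix ℝ - 1) * G.adjMatrix ℝ) + p ^ 2 • G.adjMatrix ℝ) i j := by
  intro i j
  simp_rw [D1_mul_A1_apply]
  rw [integral_const_mul, integral_finsetSum _ fun k _ => integrable_prod_ind hmeas _]
  simp_rw [integral_prod_ind hp0 hmeas hindep hbern]
  rw [adjMatrix_mul_sum_pow_card, Matrix.add_apply, Matrix.smul_apply, Matrix.smul_apply,
    degMatrix_sub_one_mul_adjMatrix_apply, smul_eq_mul, smul_eq_mul]

theorem stmt6 {N : ℕ} (G : SimpleGraph (Fin N)) [DecidableRel G.Adj]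
    {Ω : Type*} [MeasurableSpace Ω] (μ : Measure Ω) [IsProbabilityMeasure μ]
    (p : ℝ) (hp0 : 0 ≤ p) (hp1 : p ≤ 1)
    (X : Fin N → Ω → Bool)
    (hmeas : ∀ i, Measurable (X i))
    (hindep : iIndepFun X μ)
    (hbern : ∀ i, μ {ω | X i ω = true} = ENNReal.ofReal p) :
    ∀ i j, ∫ ω, (D1 G (fun v => X v ω) * A1 G (fun v => X v ω)) i j ∂μ
      = (p ^ 3 • ((G.degMatrix ℝ - 1) * G.adjMatrix ℝ) + p ^ 2 • G.adjMatrix ℝ) i j :=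
  stmt6_general G μ p hp0 X hmeas hindep hbern

end
end

section
/- In the node-activation model with gossip matrix W_1 = I − b L_1, assume G is connected, N ≥ 2, 0 < p ≤ 1, and 0 < b ≤ 1/(2Δ(G)) where Δ(G) is the maximum degree of G. Then the second largest eigenvalue of the symmetric matrix E[W_1²] equals f_{b,p}(λ_{N−1}(L_G)) = 1 + (−2bp² + 2b²p² − 2p³b²) λ_{N−1}(L_G) + b² p³ λ_{N−1}(L_G)², where λ_{N−1}(L_G) denotes the smallest nonzero eigenvalue of the Laplacian L_G. -/
open MeasureTheory ProbabilityTheory Matrix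

noncomputable section

/-- Entrywise expectation of a random matrix. -/
def matExp {N : ℕ} {Ω : Type*} [MeasurableSpace Ω] (μ : Measure Ω)
    (F : Ω → Matrix (Fin N) (Fin N) ℝ) : Matrix (Fin N) (Fin N) ℝ :=
  Matrix.of fun i j => ∫ ω, F ω i j ∂μ

/-- Eigenvalues of a symmetric real matrix, with multiplicity, sorted in
non-decreasing order. -/
def sortedEigs {N : ℕ} {M : Matrix (Fin N) (Fin N) ℝ} (hM : M.IsHermitian) :
    List ℝ :=
  (Finset.univ.val.map hM.eigenvalues).sort (· ≤ ·)

/-- The second largest eigenvalue (with multiplicity) of a symmetric N×N real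
matrix: the second entry of its eigenvalue list sorted in non-increasing order,
i.e. the entry of index N−2 of the non-decreasingly sorted list. -/
def secondLargestEig {N : ℕ} {M : Matrix (Fin N) (Fin N) ℝ}
    (hM : M.IsHermitian) : ℝ :=
  (sortedEigs hM).getD (N - 2) 0

/-- The largest eigenvalue of a symmetric real matrix. -/
def largestEig {N : ℕ} {M : Matrix (Fin N) (Fin N) ℝ} (hM : M.IsHermitian) : ℝ :=
  sSup {x : ℝ | ∃ i, hM.eigenvalues i = x}

/-- The smallest nonzero eigenvalue of a symmetric real matrix. -/
def smallestNonzeroEig {N : ℕ} {M : Matrix (Fin N) (Fin N) ℝ}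
    (hM : M.IsHermitian) : ℝ :=
  sInf {x : ℝ | (∃ i, hM.eigenvalues i = x) ∧ x ≠ 0}

open Finset Polynomial

set_option linter.unusedSectionVars false
set_option linter.unusedVariables false
set_option linter.unreachableTactic false
set_option linter.unusedTactic false
set_option maxHeartbeats 1000000

section Aux
variable {N : ℕ} {Ω : Type*} [MeasurableSpace Ω] {μ : Measure Ω} [IsProbabilityMeasure μ]
  {p : ℝ} {X : Fin N → Ω → Bool}

lemma Pmul (ω : Ω) (s t : Finset (Fin N)) :
    (∏ v ∈ s, ind (X v ω)) * (∏ v ∈ t, ind (X v ω)) = ∏ v ∈ s ∪ t, ind (X v ω) := by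
  rw [← Finset.prod_union_inter]
  by_cases h : ∃ v ∈ s ∩ t, ind (X v ω) = 0
  · obtain ⟨v, hv, h0⟩ := h
    rw [Finset.prod_eq_zero hv h0, mul_zero,
      Finset.prod_eq_zero (Finset.mem_union_left t (Finset.mem_inter.mp hv).1) h0]
  · push_neg at h
    have : ∏ v ∈ s ∩ t, ind (X v ω) = 1 := Finset.prod_eq_one fun v hv => by
      have := h v hv; cases hx : X v ω <;> simp [ind, hx] at this ⊢
    rw [this, mul_one]

lemma intP (hmeas : ∀ i, Measurable (X i)) (s : Finset (Fin N)) :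
    Integrable (fun ω => ∏ v ∈ s, ind (X v ω)) μ := by
  have hm : Measurable fun ω => ∏ v ∈ s, ind (X v ω) := by
    apply Finset.measurable_prod
    intro v _
    exact (measurable_from_top (f := ind)).comp (hmeas v)
  have hind01 : ∀ b, 0 ≤ ind b ∧ ind b ≤ 1 := by
    intro b; cases b <;> simp [ind]
  refine (integrable_const (1:ℝ)).mono' hm.aestronglyMeasurable ?_
  refine Filter.Eventually.of_forall fun ω => ?_
  have h0 : 0 ≤ ∏ v ∈ s, ind (X v ω) := Finset.prod_nonneg fun v _ => (hind01 _).1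
  have h1 : ∏ v ∈ s, ind (X v ω) ≤ 1 :=
    Finset.prod_le_one (fun v _ => (hind01 _).1) (fun v _ => (hind01 _).2)
  rw [Real.norm_eq_abs, abs_of_nonneg h0]; exact h1

lemma EP (hp0 : 0 < p) (hp1 : p ≤ 1)
    (hmeas : ∀ i, Measurable (X i))
    (hindep : iIndepFun X μ)
    (hbern : ∀ i, μ {ω | X i ω = true} = ENNReal.ofReal p)
    (s : Finset (Fin N)) :
    ∫ ω, ∏ v ∈ s, ind (X v ω) ∂μ = p ^ s.card := by
  have hpt : ∀ ω, (∏ v ∈ s, ind (X v ω))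
      = Set.indicator (⋂ v ∈ s, X v ⁻¹' {true}) (fun _ => (1:ℝ)) ω := by
    intro ω
    by_cases h : ω ∈ ⋂ v ∈ s, X v ⁻¹' {true}
    · rw [Set.indicator_of_mem h]
      simp only [Set.mem_iInter, Set.mem_preimage, Set.mem_singleton_iff] at h
      exact Finset.prod_eq_one fun v hv => by simp [ind, h v hv]
    · rw [Set.indicator_of_notMem h]
      simp only [Set.mem_iInter, Set.mem_preimage, Set.mem_singleton_iff, not_forall] at h
      obtain ⟨v, hv, hfalse⟩ := h
      exact Finset.prod_eq_zero hv (by simp [ind, hfalse])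
  have hms : MeasurableSet (⋂ v ∈ s, X v ⁻¹' {true}) :=
    MeasurableSet.biInter s.countable_toSet fun v _ => (hmeas v) (by trivial)
  simp only [hpt]
  rw [MeasureTheory.integral_indicator_const _ hms]
  have heq := hindep.measure_inter_preimage_eq_mul s
    (sets := fun _ => ({true} : Set Bool)) (fun i _ => by trivial)
  have hμs : μ (⋂ v ∈ s, X v ⁻¹' {true}) = (ENNReal.ofReal p) ^ s.card := by
    rw [heq]
    have h2 : ∀ i : Fin N, μ (X i ⁻¹' {true}) = ENNReal.ofReal p := fun i => hbern i
    simp [h2]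
  rw [measureReal_def, hμs]
  simp [ENNReal.toReal_pow, ENNReal.toReal_ofReal hp0.le]

lemma EsumI {κ : Type*} (hmeas : ∀ i, Measurable (X i)) (t : Finset κ) (c : κ → ℝ)
    (s : κ → Finset (Fin N)) :
    Integrable (fun ω => ∑ k ∈ t, c k * ∏ v ∈ s k, ind (X v ω)) μ :=
  integrable_finset_sum t fun k _ => (intP hmeas (s k)).const_mul (c k)

lemma Esum {κ : Type*} (hp0 : 0 < p) (hp1 : p ≤ 1)
    (hmeas : ∀ i, Measurable (X i))
    (hindep : iIndepFun X μ)
    (hbern : ∀ i, μ {ω | X i ω = true} = ENNReal.ofReal p)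
    (t : Finset κ) (c : κ → ℝ) (s : κ → Finset (Fin N)) :
    ∫ ω, ∑ k ∈ t, c k * ∏ v ∈ s k, ind (X v ω) ∂μ
      = ∑ k ∈ t, c k * p ^ (s k).card := by
  rw [integral_finset_sum t fun k _ => (intP hmeas (s k)).const_mul (c k)]
  exact Finset.sum_congr rfl fun k _ => by
    rw [MeasureTheory.integral_const_mul, EP hp0 hp1 hmeas hindep hbern]
lemma hterm_aux (ω : Ω) {G : SimpleGraph (Fin N)} [DecidableRel G.Adj] (x y : Fin N) :
    G.adjMatrix ℝ x y * ind (X x ω) * ind (X y ω)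
      = G.adjMatrix ℝ x y * ∏ v ∈ ({x, y} : Finset (Fin N)), ind (X v ω) := by
  rw [mul_assoc]
  congr 1
  rw [show ({x, y} : Finset (Fin N)) = {x} ∪ {y} from Finset.insert_eq x {y}, ← Pmul]
  simp

lemma card_pair_adj {G : SimpleGraph (Fin N)} [DecidableRel G.Adj] {x y : Fin N}
    (h : G.Adj x y) : ({x, y} : Finset (Fin N)).card = 2 := by
  rw [Finset.card_insert_of_notMem (by simp [h.ne]), Finset.card_singleton]

lemma lap_diag {G : SimpleGraph (Fin N)} [DecidableRel G.Adj] (i : Fin N) :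
    G.lapMatrix ℝ i i = ∑ m, G.adjMatrix ℝ i m := by
  simp only [SimpleGraph.lapMatrix, Matrix.sub_apply, SimpleGraph.degMatrix,
    Matrix.diagonal_apply_eq, SimpleGraph.adjMatrix_apply, SimpleGraph.irrefl, if_false,
    sub_zero]
  exact G.degree_eq_sum_if_adj (R := ℝ) i

lemma lap_offdiag {G : SimpleGraph (Fin N)} [DecidableRel G.Adj] {i j : Fin N} (h : i ≠ j) :
    G.lapMatrix ℝ i j = - G.adjMatrix ℝ i j := by
  simp [SimpleGraph.lapMatrix, SimpleGraph.degMatrix, h]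

lemma EL1pt (ω : Ω) (G : SimpleGraph (Fin N)) [DecidableRel G.Adj] (i j : Fin N) :
    L1 G (fun v => X v ω) i j
      = (∑ m, (if i = j then G.adjMatrix ℝ i m else 0) * ∏ v ∈ ({i, m} : Finset (Fin N)), ind (X v ω))
        - G.adjMatrix ℝ i j * ∏ v ∈ ({i, j} : Finset (Fin N)), ind (X v ω) := by
  simp only [L1, D1, A1, Matrix.sub_apply, Matrix.diagonal_apply, Matrix.of_apply]
  rw [← hterm_aux]
  by_cases hij : i = j
  · subst hij
    simp only [if_pos rfl]
    congr 1
    exact Finset.sum_congr rfl fun m _ => hterm_aux ω i m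
  · simp [hij]

lemma EL1int (hmeas : ∀ i, Measurable (X i)) (G : SimpleGraph (Fin N)) [DecidableRel G.Adj]
    (i j : Fin N) : Integrable (fun ω => L1 G (fun v => X v ω) i j) μ := by
  have := (EsumI (μ := μ) hmeas Finset.univ
      (fun m => if i = j then G.adjMatrix ℝ i m else 0)
      (fun m => ({i, m} : Finset (Fin N)))).sub
    ((intP hmeas ({i, j} : Finset (Fin N))).const_mul (G.adjMatrix ℝ i j))
  exact this.congr (Filter.Eventually.of_forall fun ω => (EL1pt ω G i j).symm)

lemma EL1 (hp0 : 0 < p) (hp1 : p ≤ 1)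
    (hmeas : ∀ i, Measurable (X i))
    (hindep : iIndepFun X μ)
    (hbern : ∀ i, μ {ω | X i ω = true} = ENNReal.ofReal p)
    (G : SimpleGraph (Fin N)) [DecidableRel G.Adj] (i j : Fin N) :
    ∫ ω, L1 G (fun v => X v ω) i j ∂μ = p ^ 2 * G.lapMatrix ℝ i j := by
  rw [integral_congr_ae (Filter.Eventually.of_forall fun ω => EL1pt ω G i j)]
  rw [integral_sub (EsumI hmeas _ _ _)
    ((intP hmeas ({i, j} : Finset (Fin N))).const_mul (G.adjMatrix ℝ i j))]
  rw [Esum hp0 hp1 hmeas hindep hbern, MeasureTheory.integral_const_mul,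
    EP hp0 hp1 hmeas hindep hbern]
  by_cases hij : i = j
  · subst hij
    simp only [eq_self_iff_true, if_true]
    have h1 : ∀ m : Fin N, G.adjMatrix ℝ i m * p ^ ({i, m} : Finset (Fin N)).card
        = G.adjMatrix ℝ i m * p ^ 2 := by
      intro m
      by_cases hadj : G.Adj i m
      · rw [card_pair_adj hadj]
      · simp [SimpleGraph.adjMatrix_apply, hadj]
    rw [Finset.sum_congr rfl fun m _ => h1 m, ← Finset.sum_mul, lap_diag]
    simp [SimpleGraph.adjMatrix_apply, G.irrefl]
    ring
  · simp only [if_neg hij, zero_mul, Finset.sum_const_zero, zero_sub, lap_offdiag hij]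
    by_cases hadj : G.Adj i j
    · rw [card_pair_adj hadj]; ring
    · simp [SimpleGraph.adjMatrix_apply, hadj]
lemma adj_idem (G : SimpleGraph (Fin N)) [DecidableRel G.Adj] (x y : Fin N) :
    G.adjMatrix ℝ x y * G.adjMatrix ℝ x y = G.adjMatrix ℝ x y := by
  by_cases h : G.Adj x y <;> simp [SimpleGraph.adjMatrix_apply, h]

lemma adj_symm' (G : SimpleGraph (Fin N)) [DecidableRel G.Adj] (x y : Fin N) :
    G.adjMatrix ℝ x y = G.adjMatrix ℝ y x := by
  simp [SimpleGraph.adjMatrix_apply, G.adj_comm]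

lemma lap_entry (G : SimpleGraph (Fin N)) [DecidableRel G.Adj] (x y : Fin N) :
    G.lapMatrix ℝ x y
      = (if x = y then ∑ m, G.adjMatrix ℝ x m else 0) - G.adjMatrix ℝ x y := by
  by_cases h : x = y
  · subst h; simp [lap_diag, SimpleGraph.adjMatrix_apply, G.irrefl]
  · simp [lap_offdiag h, h]

lemma card3 {i m n : Fin N} (him : i ≠ m) (hin : i ≠ n) :
    ({i, m, n} : Finset (Fin N)).card = if m = n then 2 else 3 := by
  by_cases h : m = n
  · subst h
    rw [if_pos rfl, show ({i, m, m} : Finset (Fin N)) = {i, m} by simp,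
      Finset.card_insert_of_notMem (by simp [him]), Finset.card_singleton]
  · rw [if_neg h]
    rw [Finset.card_insert_of_notMem (by simp [him, hin]),
      Finset.card_insert_of_notMem (by simp [h]), Finset.card_singleton]

lemma un2 (i m n : Fin N) :
    ({i, m} : Finset (Fin N)) ∪ {i, n} = {i, m, n} := by
  ext t; simp only [Finset.mem_union, Finset.mem_insert, Finset.mem_singleton]; tauto

lemma un2b (i m j : Fin N) :
    ({i, m} : Finset (Fin N)) ∪ {i, j} = {i, m, j} := by
  ext t; simp only [Finset.mem_union, Finset.mem_insert, Finset.mem_singleton]; tauto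

lemma un2c (i j m : Fin N) :
    ({i, j} : Finset (Fin N)) ∪ {j, m} = {i, j, m} := by
  ext t; simp only [Finset.mem_union, Finset.mem_insert, Finset.mem_singleton]; tauto

lemma un2d (i k j : Fin N) :
    ({i, k} : Finset (Fin N)) ∪ {k, j} = {i, k, j} := by
  ext t; simp only [Finset.mem_union, Finset.mem_insert, Finset.mem_singleton]; tauto

lemma ELLpt (ω : Ω) (G : SimpleGraph (Fin N)) [DecidableRel G.Adj] (i j : Fin N) :
    (L1 G (fun v => X v ω) * L1 G (fun v => X v ω)) i j =
      (∑ mn ∈ Finset.univ ×ˢ Finset.univ,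
          (if i = j then G.adjMatrix ℝ i mn.1 * G.adjMatrix ℝ i mn.2 else 0)
            * ∏ v ∈ ({i, mn.1, mn.2} : Finset (Fin N)), ind (X v ω))
      - (∑ m, (G.adjMatrix ℝ i m * G.adjMatrix ℝ i j)
            * ∏ v ∈ ({i, m, j} : Finset (Fin N)), ind (X v ω))
      - (∑ m, (G.adjMatrix ℝ i j * G.adjMatrix ℝ j m)
            * ∏ v ∈ ({i, j, m} : Finset (Fin N)), ind (X v ω))
      + (∑ k, (G.adjMatrix ℝ i k * G.adjMatrix ℝ k j)
            * ∏ v ∈ ({i, k, j} : Finset (Fin N)), ind (X v ω)) := by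
  have hD : ∀ x : Fin N, (D1 G (fun v => X v ω)) x x
      = ∑ m, G.adjMatrix ℝ x m * ∏ v ∈ ({x, m} : Finset (Fin N)), ind (X v ω) := by
    intro x
    simp only [D1, Matrix.diagonal_apply_eq, A1, Matrix.of_apply]
    exact Finset.sum_congr rfl fun m _ => hterm_aux ω x m
  have hA : ∀ x y : Fin N, (A1 G (fun v => X v ω)) x y
      = G.adjMatrix ℝ x y * ∏ v ∈ ({x, y} : Finset (Fin N)), ind (X v ω) := by
    intro x y
    simp only [A1, Matrix.of_apply]
    exact hterm_aux ω x y
  rw [Matrix.mul_apply]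
  simp only [L1, Matrix.sub_apply]
  have hexp : ∀ k, (D1 G (fun v => X v ω) i k - A1 G (fun v => X v ω) i k)
      * (D1 G (fun v => X v ω) k j - A1 G (fun v => X v ω) k j)
      = D1 G (fun v => X v ω) i k * D1 G (fun v => X v ω) k j
        - D1 G (fun v => X v ω) i k * A1 G (fun v => X v ω) k j
        - A1 G (fun v => X v ω) i k * D1 G (fun v => X v ω) k j
        + A1 G (fun v => X v ω) i k * A1 G (fun v => X v ω) k j := by
    intro k; ring
  rw [Finset.sum_congr rfl fun k _ => hexp k]
  rw [Finset.sum_add_distrib, Finset.sum_sub_distrib, Finset.sum_sub_distrib]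
  have h1 : ∑ k, D1 G (fun v => X v ω) i k * D1 G (fun v => X v ω) k j
      = ∑ mn ∈ Finset.univ ×ˢ Finset.univ,
          (if i = j then G.adjMatrix ℝ i mn.1 * G.adjMatrix ℝ i mn.2 else 0)
            * ∏ v ∈ ({i, mn.1, mn.2} : Finset (Fin N)), ind (X v ω) := by
    have : ∀ k, D1 G (fun v => X v ω) i k * D1 G (fun v => X v ω) k j
        = if i = k then (if k = j then D1 G (fun v => X v ω) i i * D1 G (fun v => X v ω) j j else 0) else 0 := by
      intro k
      simp only [D1, Matrix.diagonal_apply]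
      by_cases h1 : i = k <;> by_cases h2 : k = j <;> simp [h1, h2]
    rw [Finset.sum_congr rfl fun k _ => this k, Finset.sum_ite_eq Finset.univ i _]
    simp only [Finset.mem_univ, if_true, eq_self_iff_true]
    by_cases hij : i = j
    · subst hij
      simp only [if_pos rfl, hD]
      rw [Finset.sum_mul_sum]
      rw [Finset.sum_product]
      refine Finset.sum_congr rfl fun m _ => Finset.sum_congr rfl fun n _ => ?_
      rw [mul_mul_mul_comm, Pmul ω, un2]
      simp
    · simp [hij]
  have h2 : ∑ k, D1 G (fun v => X v ω) i k * A1 G (fun v => X v ω) k j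
      = ∑ m, (G.adjMatrix ℝ i m * G.adjMatrix ℝ i j)
            * ∏ v ∈ ({i, m, j} : Finset (Fin N)), ind (X v ω) := by
    have : ∀ k, D1 G (fun v => X v ω) i k * A1 G (fun v => X v ω) k j
        = if i = k then D1 G (fun v => X v ω) i i * A1 G (fun v => X v ω) k j else 0 := by
      intro k
      simp only [D1, Matrix.diagonal_apply]
      by_cases h1 : i = k <;> simp [h1]
    rw [Finset.sum_congr rfl fun k _ => this k, Finset.sum_ite_eq Finset.univ i _]
    simp only [Finset.mem_univ, if_true, hD, hA]
    rw [Finset.sum_mul]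
    refine Finset.sum_congr rfl fun m _ => ?_
    rw [mul_mul_mul_comm, Pmul ω, un2b]
  have h3 : ∑ k, A1 G (fun v => X v ω) i k * D1 G (fun v => X v ω) k j
      = ∑ m, (G.adjMatrix ℝ i j * G.adjMatrix ℝ j m)
            * ∏ v ∈ ({i, j, m} : Finset (Fin N)), ind (X v ω) := by
    have : ∀ k, A1 G (fun v => X v ω) i k * D1 G (fun v => X v ω) k j
        = if k = j then A1 G (fun v => X v ω) i k * D1 G (fun v => X v ω) j j else 0 := by
      intro k
      simp only [D1, Matrix.diagonal_apply]
      by_cases h1 : k = j <;> simp [h1]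
    rw [Finset.sum_congr rfl fun k _ => this k, Finset.sum_ite_eq' Finset.univ j _]
    simp only [Finset.mem_univ, if_true, hD, hA]
    rw [Finset.mul_sum]
    refine Finset.sum_congr rfl fun m _ => ?_
    rw [mul_mul_mul_comm, Pmul ω, un2c]
  have h4 : ∑ k, A1 G (fun v => X v ω) i k * A1 G (fun v => X v ω) k j
      = ∑ k, (G.adjMatrix ℝ i k * G.adjMatrix ℝ k j)
            * ∏ v ∈ ({i, k, j} : Finset (Fin N)), ind (X v ω) := by
    refine Finset.sum_congr rfl fun k _ => ?_
    rw [hA, hA, mul_mul_mul_comm, Pmul ω, un2d]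
  rw [h1, h2, h3, h4]
lemma perm3a (i j m : Fin N) : ({i, j, m} : Finset (Fin N)) = {j, i, m} := by
  ext t; simp only [Finset.mem_insert, Finset.mem_singleton]; tauto

lemma perm3b (i k j : Fin N) : ({i, k, j} : Finset (Fin N)) = {k, i, j} := by
  ext t; simp only [Finset.mem_insert, Finset.mem_singleton]; tauto

lemma hS1 (G : SimpleGraph (Fin N)) [DecidableRel G.Adj] (i j : Fin N) (p : ℝ) :
    (∑ mn ∈ Finset.univ ×ˢ Finset.univ,
        (if i = j then G.adjMatrix ℝ i mn.1 * G.adjMatrix ℝ i mn.2 else 0)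
          * p ^ ({i, mn.1, mn.2} : Finset (Fin N)).card)
    = if i = j then p ^ 3 * ((∑ m, G.adjMatrix ℝ i m) * (∑ m, G.adjMatrix ℝ i m))
        + (p ^ 2 - p ^ 3) * (∑ m, G.adjMatrix ℝ i m) else 0 := by
  by_cases hij : i = j
  · subst hij
    simp only [eq_self_iff_true, if_true]
    rw [Finset.sum_product]
    have perterm : ∀ m n : Fin N,
        G.adjMatrix ℝ i m * G.adjMatrix ℝ i n * p ^ ({i, m, n} : Finset (Fin N)).card
          = G.adjMatrix ℝ i m * (G.adjMatrix ℝ i n * p ^ 3)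
            + (if m = n then G.adjMatrix ℝ i m * G.adjMatrix ℝ i n * (p ^ 2 - p ^ 3) else 0) := by
      intro m n
      by_cases hm : G.Adj i m
      · by_cases hn : G.Adj i n
        · rw [card3 hm.ne hn.ne]
          by_cases hmn : m = n
          · simp only [hmn, eq_self_iff_true, if_true]; ring
          · simp only [if_neg hmn, add_zero]; ring
        · simp [SimpleGraph.adjMatrix_apply, hn]
      · simp [SimpleGraph.adjMatrix_apply, hm]
    rw [Finset.sum_congr rfl fun m _ => Finset.sum_congr rfl fun n _ => perterm m n]
    simp only [Finset.sum_add_distrib, ← Finset.mul_sum, Finset.sum_ite_eq, Finset.mem_univ,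
      if_true, adj_idem, ← Finset.sum_mul]
    ring
  · simp [hij]

lemma hS2 (G : SimpleGraph (Fin N)) [DecidableRel G.Adj] (i j : Fin N) (p : ℝ) :
    (∑ m, (G.adjMatrix ℝ i m * G.adjMatrix ℝ i j) * p ^ ({i, m, j} : Finset (Fin N)).card)
    = p ^ 3 * G.adjMatrix ℝ i j * (∑ m, G.adjMatrix ℝ i m)
      + (p ^ 2 - p ^ 3) * G.adjMatrix ℝ i j := by
  by_cases ha : G.Adj i j
  · have perterm : ∀ m : Fin N,
        G.adjMatrix ℝ i m * G.adjMatrix ℝ i j * p ^ ({i, m, j} : Finset (Fin N)).card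
          = G.adjMatrix ℝ i m * (G.adjMatrix ℝ i j * p ^ 3)
            + (if m = j then G.adjMatrix ℝ i m * G.adjMatrix ℝ i j * (p ^ 2 - p ^ 3) else 0) := by
      intro m
      by_cases hm : G.Adj i m
      · rw [card3 hm.ne ha.ne]
        by_cases hmj : m = j
        · simp only [hmj, eq_self_iff_true, if_true]; ring
        · simp only [if_neg hmj, add_zero]; ring
      · simp [SimpleGraph.adjMatrix_apply, hm]
    rw [Finset.sum_congr rfl fun m _ => perterm m]
    simp only [Finset.sum_add_distrib, Finset.sum_ite_eq', Finset.mem_univ, if_true,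
      adj_idem, ← Finset.sum_mul]
    ring
  · simp [SimpleGraph.adjMatrix_apply, ha]

lemma hS3 (G : SimpleGraph (Fin N)) [DecidableRel G.Adj] (i j : Fin N) (p : ℝ) :
    (∑ m, (G.adjMatrix ℝ i j * G.adjMatrix ℝ j m) * p ^ ({i, j, m} : Finset (Fin N)).card)
    = p ^ 3 * G.adjMatrix ℝ i j * (∑ m, G.adjMatrix ℝ j m)
      + (p ^ 2 - p ^ 3) * G.adjMatrix ℝ i j := by
  by_cases ha : G.Adj i j
  · have perterm : ∀ m : Fin N,
        G.adjMatrix ℝ i j * G.adjMatrix ℝ j m * p ^ ({i, j, m} : Finset (Fin N)).card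
          = G.adjMatrix ℝ j m * (G.adjMatrix ℝ i j * p ^ 3)
            + (if m = i then G.adjMatrix ℝ i j * G.adjMatrix ℝ j m * (p ^ 2 - p ^ 3) else 0) := by
      intro m
      by_cases hm : G.Adj j m
      · rw [perm3a, card3 ha.symm.ne hm.ne]
        by_cases hmi : m = i
        · rw [if_pos hmi.symm, if_pos hmi]; ring
        · rw [if_neg (fun h => hmi h.symm), if_neg hmi]; ring
      · simp [SimpleGraph.adjMatrix_apply, hm]
    rw [Finset.sum_congr rfl fun m _ => perterm m]
    simp only [Finset.sum_add_distrib, Finset.sum_ite_eq', Finset.mem_univ, if_true,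
      ← Finset.sum_mul]
    rw [adj_symm' G j i, adj_idem]
    ring
  · simp [SimpleGraph.adjMatrix_apply, ha]

lemma hS4 (G : SimpleGraph (Fin N)) [DecidableRel G.Adj] (i j : Fin N) (p : ℝ) :
    (∑ k, (G.adjMatrix ℝ i k * G.adjMatrix ℝ k j) * p ^ ({i, k, j} : Finset (Fin N)).card)
    = (if i = j then p ^ 2 else p ^ 3) * (∑ k, G.adjMatrix ℝ i k * G.adjMatrix ℝ k j) := by
  rw [Finset.mul_sum]
  refine Finset.sum_congr rfl fun k _ => ?_
  by_cases hik : G.Adj i k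
  · by_cases hkj : G.Adj k j
    · rw [perm3b, card3 hik.symm.ne hkj.ne]
      by_cases hij : i = j <;> simp [hij] <;> ring
    · simp [SimpleGraph.adjMatrix_apply, hkj]
  · simp [SimpleGraph.adjMatrix_apply, hik]
lemma lapsq (G : SimpleGraph (Fin N)) [DecidableRel G.Adj] (i j : Fin N) :
    (G.lapMatrix ℝ * G.lapMatrix ℝ) i j
      = (if i = j then (∑ m, G.adjMatrix ℝ i m) * (∑ m, G.adjMatrix ℝ i m) else 0)
        - (∑ m, G.adjMatrix ℝ i m) * G.adjMatrix ℝ i j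
        - G.adjMatrix ℝ i j * (∑ m, G.adjMatrix ℝ j m)
        + ∑ k, G.adjMatrix ℝ i k * G.adjMatrix ℝ k j := by
  rw [Matrix.mul_apply]
  have perterm : ∀ k, G.lapMatrix ℝ i k * G.lapMatrix ℝ k j
      = (if i = k then (if k = j then (∑ m, G.adjMatrix ℝ i m) * (∑ m, G.adjMatrix ℝ k m) else 0) else 0)
        - (if i = k then (∑ m, G.adjMatrix ℝ i m) * G.adjMatrix ℝ k j else 0)
        - (if k = j then G.adjMatrix ℝ i k * (∑ m, G.adjMatrix ℝ k m) else 0)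
        + G.adjMatrix ℝ i k * G.adjMatrix ℝ k j := by
    intro k
    rw [lap_entry G i k, lap_entry G k j]
    by_cases h1 : i = k
    · by_cases h2 : k = j
      · simp only [if_pos h1, if_pos h2]; ring
      · simp only [if_pos h1, if_neg h2]; ring
    · by_cases h2 : k = j
      · simp only [if_neg h1, if_pos h2]; ring
      · simp only [if_neg h1, if_neg h2]; ring
  rw [Finset.sum_congr rfl fun k _ => perterm k]
  simp only [Finset.sum_add_distrib, Finset.sum_sub_distrib, Finset.sum_ite_eq,
    Finset.sum_ite_eq', Finset.mem_univ, if_true]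

lemma ELLint (hmeas : ∀ i, Measurable (X i)) (G : SimpleGraph (Fin N)) [DecidableRel G.Adj]
    (i j : Fin N) :
    Integrable (fun ω => (L1 G (fun v => X v ω) * L1 G (fun v => X v ω)) i j) μ := by
  have h := (((EsumI (μ := μ) hmeas (Finset.univ ×ˢ Finset.univ)
      (fun mn => if i = j then G.adjMatrix ℝ i mn.1 * G.adjMatrix ℝ i mn.2 else 0)
      (fun mn => ({i, mn.1, mn.2} : Finset (Fin N)))).sub
    (EsumI hmeas Finset.univ (fun m => G.adjMatrix ℝ i m * G.adjMatrix ℝ i j)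
      (fun m => ({i, m, j} : Finset (Fin N))))).sub
    (EsumI hmeas Finset.univ (fun m => G.adjMatrix ℝ i j * G.adjMatrix ℝ j m)
      (fun m => ({i, j, m} : Finset (Fin N))))).add
    (EsumI hmeas Finset.univ (fun k => G.adjMatrix ℝ i k * G.adjMatrix ℝ k j)
      (fun k => ({i, k, j} : Finset (Fin N))))
  exact h.congr (Filter.Eventually.of_forall fun ω => (ELLpt ω G i j).symm)

lemma ELL (hp0 : 0 < p) (hp1 : p ≤ 1)
    (hmeas : ∀ i, Measurable (X i))
    (hindep : iIndepFun X μ)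
    (hbern : ∀ i, μ {ω | X i ω = true} = ENNReal.ofReal p)
    (G : SimpleGraph (Fin N)) [DecidableRel G.Adj] (i j : Fin N) :
    ∫ ω, (L1 G (fun v => X v ω) * L1 G (fun v => X v ω)) i j ∂μ
      = (2 * p ^ 2 - 2 * p ^ 3) * G.lapMatrix ℝ i j
        + p ^ 3 * (G.lapMatrix ℝ * G.lapMatrix ℝ) i j := by
  rw [integral_congr_ae (Filter.Eventually.of_forall fun ω => ELLpt ω G i j)]
  have I1 := EsumI (μ := μ) hmeas (Finset.univ ×ˢ Finset.univ)
      (fun mn => if i = j then G.adjMatrix ℝ i mn.1 * G.adjMatrix ℝ i mn.2 else 0)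
      (fun mn => ({i, mn.1, mn.2} : Finset (Fin N)))
  have I2 := EsumI (μ := μ) hmeas Finset.univ
      (fun m => G.adjMatrix ℝ i m * G.adjMatrix ℝ i j) (fun m => ({i, m, j} : Finset (Fin N)))
  have I3 := EsumI (μ := μ) hmeas Finset.univ
      (fun m => G.adjMatrix ℝ i j * G.adjMatrix ℝ j m) (fun m => ({i, j, m} : Finset (Fin N)))
  have I4 := EsumI (μ := μ) hmeas Finset.univ
      (fun k => G.adjMatrix ℝ i k * G.adjMatrix ℝ k j) (fun k => ({i, k, j} : Finset (Fin N)))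
  have hsplit : (∫ ω, ((∑ mn ∈ Finset.univ ×ˢ Finset.univ,
          (if i = j then G.adjMatrix ℝ i mn.1 * G.adjMatrix ℝ i mn.2 else 0)
            * ∏ v ∈ ({i, mn.1, mn.2} : Finset (Fin N)), ind (X v ω))
      - (∑ m, (G.adjMatrix ℝ i m * G.adjMatrix ℝ i j)
            * ∏ v ∈ ({i, m, j} : Finset (Fin N)), ind (X v ω))
      - (∑ m, (G.adjMatrix ℝ i j * G.adjMatrix ℝ j m)
            * ∏ v ∈ ({i, j, m} : Finset (Fin N)), ind (X v ω))
      + (∑ k, (G.adjMatrix ℝ i k * G.adjMatrix ℝ k j)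
            * ∏ v ∈ ({i, k, j} : Finset (Fin N)), ind (X v ω))) ∂μ)
      = (∫ ω, (∑ mn ∈ Finset.univ ×ˢ Finset.univ,
          (if i = j then G.adjMatrix ℝ i mn.1 * G.adjMatrix ℝ i mn.2 else 0)
            * ∏ v ∈ ({i, mn.1, mn.2} : Finset (Fin N)), ind (X v ω)) ∂μ)
        - (∫ ω, (∑ m, (G.adjMatrix ℝ i m * G.adjMatrix ℝ i j)
            * ∏ v ∈ ({i, m, j} : Finset (Fin N)), ind (X v ω)) ∂μ)
        - (∫ ω, (∑ m, (G.adjMatrix ℝ i j * G.adjMatrix ℝ j m)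
            * ∏ v ∈ ({i, j, m} : Finset (Fin N)), ind (X v ω)) ∂μ)
        + (∫ ω, (∑ k, (G.adjMatrix ℝ i k * G.adjMatrix ℝ k j)
            * ∏ v ∈ ({i, k, j} : Finset (Fin N)), ind (X v ω)) ∂μ) := by
    have I12 : Integrable (fun ω => (∑ mn ∈ Finset.univ ×ˢ Finset.univ,
          (if i = j then G.adjMatrix ℝ i mn.1 * G.adjMatrix ℝ i mn.2 else 0)
            * ∏ v ∈ ({i, mn.1, mn.2} : Finset (Fin N)), ind (X v ω))
        - (∑ m, (G.adjMatrix ℝ i m * G.adjMatrix ℝ i j)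
            * ∏ v ∈ ({i, m, j} : Finset (Fin N)), ind (X v ω))) μ := I1.sub I2
    have I123 : Integrable (fun ω => (∑ mn ∈ Finset.univ ×ˢ Finset.univ,
          (if i = j then G.adjMatrix ℝ i mn.1 * G.adjMatrix ℝ i mn.2 else 0)
            * ∏ v ∈ ({i, mn.1, mn.2} : Finset (Fin N)), ind (X v ω))
        - (∑ m, (G.adjMatrix ℝ i m * G.adjMatrix ℝ i j)
            * ∏ v ∈ ({i, m, j} : Finset (Fin N)), ind (X v ω))
        - (∑ m, (G.adjMatrix ℝ i j * G.adjMatrix ℝ j m)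
            * ∏ v ∈ ({i, j, m} : Finset (Fin N)), ind (X v ω))) μ := I12.sub I3
    rw [← integral_sub I1 I2, ← integral_sub I12 I3, ← integral_add I123 I4]
  rw [hsplit]
  rw [Esum hp0 hp1 hmeas hindep hbern, Esum hp0 hp1 hmeas hindep hbern,
    Esum hp0 hp1 hmeas hindep hbern, Esum hp0 hp1 hmeas hindep hbern]
  rw [hS1, hS2, hS3, hS4, lap_entry G i j, lapsq G i j]
  by_cases hij : i = j
  · subst hij
    have hQ : (∑ x, G.adjMatrix ℝ i x * G.adjMatrix ℝ x i) = ∑ x, G.adjMatrix ℝ i x :=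
      Finset.sum_congr rfl fun x _ => by rw [← adj_symm' G i x, adj_idem]
    have h0 : G.adjMatrix ℝ i i = 0 := by simp
    simp only [eq_self_iff_true, if_true, hQ, h0]
    ring
  · simp only [if_neg hij]
    ring

lemma matExpW (hp0 : 0 < p) (hp1 : p ≤ 1)
    (hmeas : ∀ i, Measurable (X i))
    (hindep : iIndepFun X μ)
    (hbern : ∀ i, μ {ω | X i ω = true} = ENNReal.ofReal p)
    (G : SimpleGraph (Fin N)) [DecidableRel G.Adj] (b : ℝ)
    (W1 : Ω → Matrix (Fin N) (Fin N) ℝ)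
    (hW1 : ∀ ω, W1 ω = 1 - b • L1 G (fun v => X v ω)) :
    matExp μ (fun ω => W1 ω * W1 ω)
      = 1 + (-2*b*p^2 + 2*b^2*p^2 - 2*p^3*b^2) • G.lapMatrix ℝ
        + (b^2*p^3) • (G.lapMatrix ℝ * G.lapMatrix ℝ) := by
  apply Matrix.ext
  intro i j
  have hpt : ∀ ω, (W1 ω * W1 ω) i j
      = (1 : Matrix (Fin N) (Fin N) ℝ) i j
        - (2*b) * L1 G (fun v => X v ω) i j
        + b^2 * (L1 G (fun v => X v ω) * L1 G (fun v => X v ω)) i j := by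
    intro ω
    rw [hW1 ω]
    have h1 : (b • L1 G (fun v => X v ω)) * (b • L1 G (fun v => X v ω))
        = (b^2) • (L1 G (fun v => X v ω) * L1 G (fun v => X v ω)) := by
      rw [smul_mul_smul_comm, pow_two]
    have h2 : (2*b) • L1 G (fun v => X v ω) = b • L1 G (fun v => X v ω) + b • L1 G (fun v => X v ω) := by
      rw [two_mul, add_smul]
    have hexp : (1 - b • L1 G (fun v => X v ω)) * (1 - b • L1 G (fun v => X v ω))
        = 1 - (2*b) • L1 G (fun v => X v ω)
          + (b^2) • (L1 G (fun v => X v ω) * L1 G (fun v => X v ω)) := by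
      rw [mul_sub, sub_mul, sub_mul]
      simp only [mul_one, one_mul]
      rw [h1, h2]
      abel
    rw [hexp]
    simp only [Matrix.add_apply, Matrix.sub_apply, Matrix.smul_apply, smul_eq_mul]
  show (∫ ω, (W1 ω * W1 ω) i j ∂μ) = _
  rw [integral_congr_ae (Filter.Eventually.of_forall hpt)]
  have Ic : Integrable (fun _ : Ω => (1 : Matrix (Fin N) (Fin N) ℝ) i j) μ := integrable_const _
  have I1 := (EL1int (μ := μ) hmeas G i j).const_mul (2*b)
  have I2 := (ELLint (μ := μ) hmeas G i j).const_mul (b^2)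
  have I12 : Integrable (fun ω : Ω => (1 : Matrix (Fin N) (Fin N) ℝ) i j
      - 2 * b * L1 G (fun v => X v ω) i j) μ := Ic.sub I1
  rw [integral_add I12 I2, integral_sub Ic I1, integral_const]
  rw [MeasureTheory.integral_const_mul, MeasureTheory.integral_const_mul]
  rw [EL1 hp0 hp1 hmeas hindep hbern, ELL hp0 hp1 hmeas hindep hbern]
  simp only [measureReal_def, measure_univ, ENNReal.toReal_one, one_smul, Matrix.add_apply, Matrix.smul_apply,
    smul_eq_mul]
  ring

end Aux

section Aux2

lemma charpoly_conj {n : ℕ} (U B : Matrix (Fin n) (Fin n) ℝ)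
    (hU : U * star U = 1) : (U * B * star U).charpoly = B.charpoly := by
  have hmap : ∀ (P Q : Matrix (Fin n) (Fin n) ℝ),
      (P * Q).map (Polynomial.C (R := ℝ)) = P.map C * Q.map C := fun P Q =>
    Matrix.map_mul
  have hchar : charmatrix (U * B * star U) = U.map C * charmatrix B * (star U).map C := by
    unfold charmatrix
    simp only [RingHom.mapMatrix_apply]
    rw [mul_sub, sub_mul, ← hmap, ← hmap]
    congr 1
    · rw [mul_assoc]
      rw [scalar_commute (Polynomial.X) (fun r => (Commute.all _ _)) _]
      rw [← mul_assoc, ← hmap, hU]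
      simp
  rw [Matrix.charpoly, Matrix.charpoly, hchar, det_mul, det_mul]
  have : det (U.map (Polynomial.C (R := ℝ))) * det ((star U).map C) = 1 := by
    rw [mul_comm (det (U.map C)), ← det_mul, ← hmap]
    rw [show star U * U = 1 from mul_eq_one_comm.mp hU]
    simp
  calc det (U.map C) * det (charmatrix B) * det ((star U).map C)
      = det (charmatrix B) * (det (U.map C) * det ((star U).map C)) := by ring
    _ = det (charmatrix B) := by rw [this, mul_one]

lemma charpoly_diag {n : ℕ} (v : Fin n → ℝ) :
    (Matrix.diagonal v).charpoly = ∏ i, (X - C (v i)) := by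
  have : charmatrix (Matrix.diagonal v) = Matrix.diagonal (fun i => X - C (v i)) := by
    apply Matrix.ext
    intro i j
    by_cases h : i = j
    · subst h; simp [charmatrix_apply_eq]
    · rw [charmatrix_apply_ne _ _ _ h, Matrix.diagonal_apply_ne _ h,
        Matrix.diagonal_apply_ne _ h, map_zero, neg_zero]
  rw [Matrix.charpoly, this, det_diagonal]

/-- eigenvalue multiset of a Hermitian real matrix is determined by charpoly. -/
lemma eig_multiset_eq {n : ℕ} {M : Matrix (Fin n) (Fin n) ℝ} (hM : M.IsHermitian)
    (w : Fin n → ℝ) (hw : M.charpoly = ∏ i, (X - C (w i))) :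
    (Finset.univ.val.map hM.eigenvalues) = (Finset.univ.val.map w) := by
  have hU : (hM.eigenvectorUnitary : Matrix (Fin n) (Fin n) ℝ)
      * star (hM.eigenvectorUnitary : Matrix (Fin n) (Fin n) ℝ) = 1 :=
    Matrix.mem_unitaryGroup_iff.mp hM.eigenvectorUnitary.2
  have hspec := hM.spectral_theorem
  simp only [Unitary.conjStarAlgAut_apply] at hspec
  have h1 : M.charpoly = ∏ i, (X - C (hM.eigenvalues i)) := by
    conv_lhs => rw [hspec]
    rw [charpoly_conj _ _ hU]
    rw [show (RCLike.ofReal ∘ hM.eigenvalues : Fin n → ℝ) = hM.eigenvalues from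
      funext fun i => by simp, charpoly_diag]
  have h2 : (∏ i, (X - C (hM.eigenvalues i))) = ∏ i, (X - C (w i)) := by
    rw [← h1, hw]
  have h3 := congrArg Polynomial.roots h2
  rw [Finset.prod_eq_multiset_prod, Finset.prod_eq_multiset_prod] at h3
  have h4 : Multiset.map (fun i => X - C (hM.eigenvalues i)) Finset.univ.val
      = Multiset.map (fun x : ℝ => X - C x) (Multiset.map hM.eigenvalues Finset.univ.val) := by
    rw [Multiset.map_map]; rfl
  have h5 : Multiset.map (fun i => X - C (w i)) Finset.univ.val
      = Multiset.map (fun x : ℝ => X - C x) (Multiset.map w Finset.univ.val) := by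
    rw [Multiset.map_map]; rfl
  rwa [h4, h5, Polynomial.roots_multiset_prod_X_sub_C,
    Polynomial.roots_multiset_prod_X_sub_C] at h3

lemma poly_spec {n : ℕ} {L : Matrix (Fin n) (Fin n) ℝ} (hL : L.IsHermitian) (c d : ℝ) :
    (1 + c • L + d • (L * L)).charpoly
      = ∏ i, (X - C (1 + c * hL.eigenvalues i + d * (hL.eigenvalues i) ^ 2)) := by
  set U : Matrix (Fin n) (Fin n) ℝ := (hL.eigenvectorUnitary : Matrix (Fin n) (Fin n) ℝ) with hUdef
  have hU : U * star U = 1 := Matrix.mem_unitaryGroup_iff.mp hL.eigenvectorUnitary.2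
  have hU' : star U * U = 1 := mul_eq_one_comm.mp hU
  set lam := hL.eigenvalues with hlam
  have hdiag : L = U * Matrix.diagonal lam * star U := by
    have := hL.spectral_theorem
    rwa [show (RCLike.ofReal ∘ lam : Fin n → ℝ) = lam from funext fun i => by simp] at this
  have hD : Matrix.diagonal (fun i => 1 + c * lam i + d * (lam i) ^ 2)
      = 1 + c • Matrix.diagonal lam + d • (Matrix.diagonal lam * Matrix.diagonal lam) := by
    apply Matrix.ext
    intro i j
    by_cases h : i = j
    · subst h
      simp only [Matrix.diagonal_apply_eq, Matrix.add_apply, Matrix.smul_apply,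
        Matrix.one_apply_eq, Matrix.diagonal_mul_diagonal, smul_eq_mul]
      ring
    · simp only [Matrix.diagonal_apply_ne _ h, Matrix.add_apply, Matrix.smul_apply,
        Matrix.one_apply_ne h, Matrix.diagonal_mul_diagonal, smul_eq_mul, add_zero, mul_zero,
        zero_add]
  have hLL : (U * Matrix.diagonal lam * star U) * (U * Matrix.diagonal lam * star U)
      = U * (Matrix.diagonal lam * Matrix.diagonal lam) * star U := by
    simp only [mul_assoc]
    rw [← mul_assoc (star U) U, hU', one_mul]
  have hM : 1 + c • L + d • (L * L)
      = U * Matrix.diagonal (fun i => 1 + c * lam i + d * (lam i) ^ 2) * star U := by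
    rw [hD, hdiag, hLL]
    rw [mul_add, mul_add, add_mul, add_mul]
    rw [mul_one, hU]
    rw [mul_smul_comm, smul_mul_assoc, mul_smul_comm, smul_mul_assoc]
  rw [hM, charpoly_conj _ _ hU, charpoly_diag]

lemma hasEig {N : ℕ} (L : Matrix (Fin N) (Fin N) ℝ) (μ : ℝ) (h : μ ∈ spectrum ℝ L) :
    Module.End.HasEigenvalue (Matrix.toLin' L) μ := by
  have heq : Matrix.toLin' (R := ℝ) (n := Fin N) = Matrix.toLin (Pi.basisFun ℝ (Fin N)) (Pi.basisFun ℝ (Fin N)) := (Matrix.toLin_eq_toLin').symm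
  rw [heq, show Matrix.toLin (Pi.basisFun ℝ (Fin N)) (Pi.basisFun ℝ (Fin N)) L
    = Matrix.toLinAlgEquiv (Pi.basisFun ℝ (Fin N)) L from rfl]
  rw [Module.End.hasEigenvalue_iff_mem_spectrum, AlgEquiv.spectrum_eq]
  exact h

lemma lap_eig_le {N : ℕ} (G : SimpleGraph (Fin N)) [DecidableRel G.Adj]
    (hL : (G.lapMatrix ℝ).IsHermitian) (i : Fin N) :
    hL.eigenvalues i ≤ 2 * (G.maxDegree : ℝ) := by
  have hspec := hL.eigenvalues_mem_spectrum_real i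
  have heig := hasEig _ _ hspec
  obtain ⟨k, hk⟩ := eigenvalue_mem_ball heig
  rw [Metric.mem_closedBall, Real.dist_eq] at hk
  have habs := abs_sub_abs_le_abs_sub _ _ |>.trans hk
  -- bound diagonal and off-diagonal sums
  have hdiag : G.lapMatrix ℝ k k = (G.degree k : ℝ) := by
    simp [SimpleGraph.lapMatrix, SimpleGraph.degMatrix]
  have hoff : (∑ j ∈ Finset.univ.erase k, ‖G.lapMatrix ℝ k j‖) = (G.degree k : ℝ) := by
    have h1 : ∀ j ∈ Finset.univ.erase k, ‖G.lapMatrix ℝ k j‖ = G.adjMatrix ℝ k j := by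
      intro j hj
      have hkj : k ≠ j := (Finset.ne_of_mem_erase hj).symm
      rw [lap_offdiag hkj, norm_neg, Real.norm_eq_abs]
      by_cases h : G.Adj k j <;> simp [SimpleGraph.adjMatrix_apply, h]
    rw [Finset.sum_congr rfl h1]
    have h2 : (∑ j ∈ Finset.univ.erase k, G.adjMatrix ℝ k j)
        = (∑ j, G.adjMatrix ℝ k j) - G.adjMatrix ℝ k k := by
      rw [Finset.sum_erase_eq_sub (Finset.mem_univ k)]
    rw [h2]
    simp only [SimpleGraph.adjMatrix_apply, if_neg (G.irrefl), sub_zero]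
    exact (G.degree_eq_sum_if_adj (R := ℝ) k).symm
  have hdeg : (G.degree k : ℝ) ≤ (G.maxDegree : ℝ) := by
    exact_mod_cast G.degree_le_maxDegree k
  have h3 : hL.eigenvalues i - G.lapMatrix ℝ k k ≤ (G.degree k : ℝ) := by
    calc hL.eigenvalues i - G.lapMatrix ℝ k k ≤ |hL.eigenvalues i - G.lapMatrix ℝ k k| := le_abs_self _
      _ ≤ _ := hk.trans_eq hoff
  rw [hdiag] at h3
  linarith

lemma lap_eig_nonneg {N : ℕ} (G : SimpleGraph (Fin N)) [DecidableRel G.Adj]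
    (hL : (G.lapMatrix ℝ).IsHermitian) (i : Fin N) : 0 ≤ hL.eigenvalues i :=
  (SimpleGraph.posSemidef_lapMatrix ℝ G).eigenvalues_nonneg i

lemma lap_zero_unique {N : ℕ} (hN : 2 ≤ N) (G : SimpleGraph (Fin N)) [DecidableRel G.Adj]
    (hconn : G.Connected) (hL : (G.lapMatrix ℝ).IsHermitian) :
    ∃! i, hL.eigenvalues i = 0 := by
  classical
  have hccard : Fintype.card G.ConnectedComponent = 1 := by
    rw [Fintype.card_eq_one_iff]
    have : Nonempty (Fin N) := ⟨⟨0, by omega⟩⟩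
    obtain ⟨v⟩ := this
    refine ⟨G.connectedComponentMk v, ?_⟩
    intro c
    induction c using SimpleGraph.ConnectedComponent.ind with
    | _ w => exact SimpleGraph.ConnectedComponent.sound (hconn.preconnected w v)
  have hker : Module.finrank ℝ (LinearMap.ker (Matrix.toLin' (G.lapMatrix ℝ))) = 1 := by
    have h := SimpleGraph.card_connectedComponent_eq_finrank_ker_toLin'_lapMatrix (G := G)
    rw [hccard] at h
    exact h.symm
  have hkereq : LinearMap.ker (Matrix.toLin' (G.lapMatrix ℝ))
      = LinearMap.ker ((G.lapMatrix ℝ).mulVecLin) := by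
    congr 1
  have hrn := LinearMap.finrank_range_add_finrank_ker ((G.lapMatrix ℝ).mulVecLin)
  have hrank : (G.lapMatrix ℝ).rank = N - 1 := by
    rw [Matrix.rank]
    rw [← hkereq, hker] at hrn
    simp only [Module.finrank_pi, Fintype.card_fin] at hrn
    omega
  have hcnz : Fintype.card {i // hL.eigenvalues i ≠ 0} = N - 1 := by
    rw [← hL.rank_eq_card_non_zero_eigs, hrank]
  have hcz : Fintype.card {i // hL.eigenvalues i = 0} = 1 := by
    have hcompl := Fintype.card_subtype_compl (fun i => hL.eigenvalues i ≠ 0)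
    have hequiv : Fintype.card {i // ¬ hL.eigenvalues i ≠ 0}
        = Fintype.card {i // hL.eigenvalues i = 0} :=
      Fintype.card_congr (Equiv.subtypeEquivRight fun i => by simp)
    rw [hequiv, hcnz, Fintype.card_fin] at hcompl
    omega
  rw [Fintype.card_eq_one_iff] at hcz
  obtain ⟨⟨i0, hi0⟩, huniq⟩ := hcz
  refine ⟨i0, hi0, fun j hj => ?_⟩
  have := huniq ⟨j, hj⟩
  exact congrArg Subtype.val this

lemma sortKey (N : ℕ) (hN : 2 ≤ N) (a e : Fin N → ℝ) (f : ℝ → ℝ) (R : ℝ)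
    (hperm : (Finset.univ.val.map e) = (Finset.univ.val.map fun i => f (a i)))
    (hrange : ∀ i, 0 ≤ a i ∧ a i ≤ R)
    (hanti : ∀ x y : ℝ, 0 ≤ x → x ≤ y → y ≤ R → f y ≤ f x)
    (huniq : ∃! i, a i = 0)
    (m : ℝ) (hm : ∃ i, a i = m) (hm0 : m ≠ 0) (hmin : ∀ i, a i ≠ 0 → m ≤ a i) :
    ((Finset.univ.val.map e).sort (· ≤ ·)).getD (N - 2) 0 = f m := by
  classical
  set s : Multiset ℝ := Finset.univ.val.map a with hs
  set l : List ℝ := s.sort (· ≤ ·) with hl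
  have hsort : l.Pairwise (· ≤ ·) := Multiset.pairwise_sort s _
  have hlperm : (l : Multiset ℝ) = s := Multiset.sort_eq s _
  have hlen : l.length = N := by
    rw [hl, Multiset.length_sort, hs, Multiset.card_map]
    simp
  have hmem : ∀ x ∈ l, ∃ i, a i = x := by
    intro x hx
    have hxs : x ∈ s := by rw [← hlperm]; exact_mod_cast hx
    rw [hs] at hxs
    obtain ⟨i, _, hi⟩ := Multiset.mem_map.mp hxs
    exact ⟨i, hi⟩
  have hmem' : ∀ x, (∃ i, a i = x) → x ∈ l := by
    intro x ⟨i, hi⟩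
    have : x ∈ s := Multiset.mem_map.mpr ⟨i, by simp, hi⟩
    rw [← hlperm] at this
    exact_mod_cast this
  obtain ⟨x, t1, ht1⟩ : ∃ x t1, l = x :: t1 := by
    cases hl' : l with
    | nil => rw [hl'] at hlen; simp at hlen; omega
    | cons x t1 => exact ⟨x, t1, rfl⟩
  obtain ⟨y, t, ht⟩ : ∃ y t, t1 = y :: t := by
    cases hl' : t1 with
    | nil => rw [ht1, hl'] at hlen; simp at hlen; omega
    | cons y t => exact ⟨y, t, rfl⟩
  have hxyt : l = x :: y :: t := by rw [ht1, ht]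
  have hsort' := hxyt ▸ hsort
  rw [List.pairwise_cons] at hsort'
  obtain ⟨hxle, hsort''⟩ := hsort'
  rw [List.pairwise_cons] at hsort''
  obtain ⟨hyle, _⟩ := hsort''
  obtain ⟨i0, hi0, hi0uniq⟩ := huniq
  have h0l : (0:ℝ) ∈ l := hmem' 0 ⟨i0, hi0⟩
  have hx0 : x = 0 := by
    obtain ⟨i, hi⟩ := hmem x (by rw [hxyt]; exact List.mem_cons_self)
    have hxge : 0 ≤ x := hi ▸ (hrange i).1
    rw [hxyt] at h0l
    rcases List.mem_cons.mp h0l with h | h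
    · exact h.symm
    · exact le_antisymm (hxle 0 h) hxge
  -- count of 0 in s is exactly 1
  have hcount : s.count 0 = 1 := by
    rw [hs, Multiset.count_map]
    have : Multiset.filter (fun i => 0 = a i) Finset.univ.val = {i0} := by
      rw [show ({i0} : Multiset (Fin N)) = (({i0} : Finset (Fin N))).val from rfl]
      rw [show Multiset.filter (fun i => 0 = a i) Finset.univ.val
        = (Finset.filter (fun i => 0 = a i) Finset.univ).val from rfl]
      congr 1
      apply Finset.ext
      intro i
      simp only [Finset.mem_filter, Finset.mem_univ, true_and, Finset.mem_singleton]
      constructor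
      · intro h; exact hi0uniq i h.symm
      · intro h; subst h; exact hi0.symm
    rw [this]
    simp
  have hy0 : y ≠ 0 := by
    intro hy0
    have : l.count 0 ≥ 2 := by
      rw [hxyt, hx0, hy0]
      simp [List.count_cons]
    have hc : l.count 0 = s.count 0 := by
      rw [← hlperm, Multiset.coe_count]
    omega
  have hym : y = m := by
    obtain ⟨i, hi⟩ := hmem y (by rw [hxyt]; exact List.mem_cons_of_mem _ List.mem_cons_self)
    have h1 : m ≤ y := hi ▸ hmin i (by rw [hi]; exact hy0)
    have hml : m ∈ l := hmem' m hm
    rw [hxyt] at hml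
    rcases List.mem_cons.mp hml with h | h
    · exact absurd (h ▸ hx0) hm0
    · rcases List.mem_cons.mp h with h | h
      · exact h.symm.trans rfl |>.symm ▸ (le_antisymm h1 (le_of_eq h.symm)) ▸ h.symm
      · exact le_antisymm (hyle m h) h1 |>.symm ▸ rfl
  -- sortedness of the mapped reversed list
  have hallmem : ∀ z ∈ l, 0 ≤ z ∧ z ≤ R := by
    intro z hz
    obtain ⟨i, hi⟩ := hmem z hz
    exact hi ▸ hrange i
  have hmapsorted : ((l.map f).reverse).Pairwise (· ≤ ·) := by
    rw [List.pairwise_reverse]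
    rw [List.pairwise_map]
    refine List.Pairwise.imp_of_mem ?_ hsort
    intro p q hp hq hpq
    exact hanti p q (hallmem p hp).1 hpq (hallmem q hq).2
  have hsortlist : (Finset.univ.val.map e).sort (· ≤ ·) = (l.map f).reverse := by
    apply List.Perm.eq_of_pairwise' (Multiset.pairwise_sort _ _) hmapsorted ?_
    apply Multiset.coe_eq_coe.mp
    rw [Multiset.sort_eq]
    rw [hperm]
    have h1 : (Finset.univ.val.map fun i => f (a i)) = s.map f := by
      rw [hs, Multiset.map_map]
      rfl
    rw [h1, ← hlperm]
    have h2 : ((l : Multiset ℝ)).map f = ((l.map f : List ℝ) : Multiset ℝ) := by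
      simp
    rw [h2]
    exact (Multiset.coe_reverse _).symm
  rw [hsortlist]
  have htlen : t.length = N - 2 := by
    rw [hxyt] at hlen; simp at hlen; omega
  have hsplit : (l.map f).reverse = (t.map f).reverse ++ [f y, f x] := by
    rw [hxyt]
    simp
  rw [hsplit]
  have hlenrev : ((t.map f).reverse).length = N - 2 := by
    simp [htlen]
  rw [List.getD_eq_getElem _ _ (by simp [htlen])]
  rw [List.getElem_append_right (by omega)]
  simp [hlenrev, hym]

end Aux2

theorem stmt10 {N : ℕ} (hN : 2 ≤ N) (G : SimpleGraph (Fin N)) [DecidableRel G.Adj]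
    (hconn : G.Connected)
    {Ω : Type*} [MeasurableSpace Ω] (μ : Measure Ω) [IsProbabilityMeasure μ]
    (p : ℝ) (hp0 : 0 < p) (hp1 : p ≤ 1)
    (b : ℝ) (hb0 : 0 < b) (hb1 : b ≤ 1 / (2 * (G.maxDegree : ℝ)))
    (X : Fin N → Ω → Bool)
    (hmeas : ∀ i, Measurable (X i))
    (hindep : iIndepFun X μ)
    (hbern : ∀ i, μ {ω | X i ω = true} = ENNReal.ofReal p)
    (W1 : Ω → Matrix (Fin N) (Fin N) ℝ)
    (hW1 : ∀ ω, W1 ω = 1 - b • L1 G (fun v => X v ω))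
    (hE : (matExp μ (fun ω => W1 ω * W1 ω)).IsHermitian)
    (hL : (G.lapMatrix ℝ).IsHermitian) :
    secondLargestEig hE
      = 1 + (-2 * b * p ^ 2 + 2 * b ^ 2 * p ^ 2 - 2 * p ^ 3 * b ^ 2)
            * smallestNonzeroEig hL
          + b ^ 2 * p ^ 3 * smallestNonzeroEig hL ^ 2 := by
  classical
  -- max degree at least 1
  have hadj : ∃ v w, G.Adj v w := by
    have hne : (⟨0, by omega⟩ : Fin N) ≠ (⟨1, by omega⟩ : Fin N) := by
      simp [Fin.ext_iff]
    obtain ⟨wlk⟩ := hconn.preconnected ⟨0, by omega⟩ ⟨1, by omega⟩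
    cases wlk with
    | cons h _ => exact ⟨_, _, h⟩
  have hΔ1 : (1 : ℝ) ≤ (G.maxDegree : ℝ) := by
    obtain ⟨v, w, hvw⟩ := hadj
    have h1 : 0 < G.degree v := by rw [G.degree_pos_iff_exists_adj]; exact ⟨w, hvw⟩
    have h2 := G.degree_le_maxDegree v
    have : 1 ≤ G.maxDegree := by omega
    exact_mod_cast this
  -- eigenvalue multiset identification
  have hmat := matExpW hp0 hp1 hmeas hindep hbern G b W1 hW1
  have hcp : (matExp μ (fun ω => W1 ω * W1 ω)).charpoly
      = ∏ i, (Polynomial.X - Polynomial.C (1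
          + (-2*b*p^2 + 2*b^2*p^2 - 2*p^3*b^2) * hL.eigenvalues i
          + (b^2*p^3) * (hL.eigenvalues i)^2)) := by
    rw [hmat]
    exact poly_spec hL _ _
  have hperm := eig_multiset_eq hE _ hcp
  -- smallest nonzero eigenvalue facts
  have hSfin : {x : ℝ | (∃ i, hL.eigenvalues i = x) ∧ x ≠ 0}.Finite :=
    (Set.finite_range hL.eigenvalues).subset (fun x hx => hx.1)
  obtain ⟨i0, hi0, hi0u⟩ := lap_zero_unique hN G hconn hL
  have hSne : {x : ℝ | (∃ i, hL.eigenvalues i = x) ∧ x ≠ 0}.Nonempty := by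
    have hcard : 1 < Fintype.card (Fin N) := by simp; omega
    obtain ⟨j, hj⟩ := Fintype.exists_ne_of_one_lt_card hcard i0
    exact ⟨hL.eigenvalues j, ⟨j, rfl⟩, fun h => hj (hi0u j h)⟩
  have hmS : smallestNonzeroEig hL ∈ {x : ℝ | (∃ i, hL.eigenvalues i = x) ∧ x ≠ 0} :=
    hSne.csInf_mem hSfin
  have hm : ∃ i, hL.eigenvalues i = smallestNonzeroEig hL := hmS.1
  have hm0 : smallestNonzeroEig hL ≠ 0 := hmS.2
  have hmin : ∀ i, hL.eigenvalues i ≠ 0 → smallestNonzeroEig hL ≤ hL.eigenvalues i :=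
    fun i hi => csInf_le hSfin.bddBelow ⟨⟨i, rfl⟩, hi⟩
  -- eigenvalue range
  have hrange : ∀ i, 0 ≤ hL.eigenvalues i ∧ hL.eigenvalues i ≤ 2*(G.maxDegree:ℝ) :=
    fun i => ⟨lap_eig_nonneg G hL i, lap_eig_le G hL i⟩
  -- antitonicity of f on [0, 2Δ]
  have hbΔ : b * (2*(G.maxDegree:ℝ)) ≤ 1 := by
    have hpos : (0:ℝ) < 2*(G.maxDegree:ℝ) := by linarith
    rw [le_div_iff₀ hpos] at hb1
    linarith [hb1]
  have h2b : 2*b ≤ 1 := by nlinarith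
  have hanti : ∀ x y : ℝ, 0 ≤ x → x ≤ y → y ≤ 2*(G.maxDegree:ℝ) →
      (1 + (-2*b*p^2 + 2*b^2*p^2 - 2*p^3*b^2) * y + b^2*p^3 * y^2)
      ≤ (1 + (-2*b*p^2 + 2*b^2*p^2 - 2*p^3*b^2) * x + b^2*p^3 * x^2) := by
    intro x y hx hxy hy
    have hxy4 : x + y ≤ 4*(G.maxDegree:ℝ) := by linarith
    have hd : (0:ℝ) ≤ b^2*p^3 := by positivity
    have h1 : b^2*p^3*(x+y) ≤ b^2*p^3*(4*(G.maxDegree:ℝ)) :=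
      mul_le_mul_of_nonneg_left hxy4 hd
    have h3 : b*(1-p) ≤ (1-p)/2 := by nlinarith
    have h4 : 2*b*p*(G.maxDegree:ℝ) ≤ p := by nlinarith
    have hq : 1 - b + b*p - 2*b*p*(G.maxDegree:ℝ) ≥ 0 := by nlinarith
    have h2 : 2*b*p^2 - 2*b^2*p^2 + 2*b^2*p^3 - b^2*p^3*(4*(G.maxDegree:ℝ)) ≥ 0 := by
      have hbp : (0:ℝ) ≤ 2*b*p^2 := by positivity
      nlinarith [mul_nonneg hbp hq]
    have hfactor : 2*b*p^2 - 2*b^2*p^2 + 2*b^2*p^3 - b^2*p^3*(x+y) ≥ 0 := by linarith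
    nlinarith [mul_nonneg (sub_nonneg.mpr hxy) hfactor]
  have hkey := sortKey N hN hL.eigenvalues hE.eigenvalues
    (fun x => 1 + (-2*b*p^2 + 2*b^2*p^2 - 2*p^3*b^2) * x + b^2*p^3 * x^2)
    (2*(G.maxDegree:ℝ)) hperm hrange hanti ⟨i0, hi0, hi0u⟩
    (smallestNonzeroEig hL) hm hm0 hmin
  exact hkey

end
end

section
/- (Regret decomposition) Let X ⊆ ℝ^d be a convex set, V a finite set of N agents, and T a positive integer. For each t ∈ {1,…,T} and v ∈ V, let ℓ_t(·, v) : ℝ^d → ℝ be a convex differentiable function that is L-Lipschitz on X with respect to the Euclidean norm, let S_t ⊆ V, let x_t(v) ∈ X and y_t ∈ X be arbitrary points, and define ℓ̄_t(S_t, x) = (1/|S_t|) Σ_{v ∈ S_t} ℓ_t(x, v) when S_t ≠ ∅ and ℓ̄_t(S_t, x) = 0 otherwise. Let x* ∈ X be a minimizer over X of x ↦ Σ_{t=1}^T ℓ̄_t(S_t, x). Then Σ_{t=1}^T (1/|S_t|) Σ_{v ∈ S_t} ℓ̄_t(S_t, x_t(v)) − Σ_{t=1}^T ℓ̄_t(S_t,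 x*) ≤ 3 Σ_{t=1}^T Σ_{u ∈ V} (𝟙{u ∈ S_t}/|S_t|) L ‖x_t(u) − y_t‖ + Σ_{t=1}^T Σ_{v ∈ V} (𝟙{v ∈ S_t}/|S_t|) ⟨∇ℓ_t(x_t(v), v), y_t − x*⟩, with the convention 0/0 = 0 when |S_t| = 0. -/
open RealInnerProductSpace

noncomputable section

set_option linter.unusedSectionVars false
section aux
variable {E : Type*} [NormedAddCommGroup E] [InnerProductSpace ℝ E] [CompleteSpace E]

lemma lineMap_hasDerivAt' (z w : E) (t : ℝ) :
    HasDerivAt (fun s : ℝ => (AffineMap.lineMap z w : ℝ →ᵃ[ℝ] E) s) (w - z) t := by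
  simp only [AffineMap.coe_lineMap, vsub_eq_sub, vadd_eq_add]
  simpa using ((hasDerivAt_id t).smul_const (w - z)).add_const z

lemma comp_lineMap_hasDerivAt' {f : E → ℝ} {gr p : E} (z w : E) (t : ℝ)
    (hp : (AffineMap.lineMap z w : ℝ →ᵃ[ℝ] E) t = p)
    (hg : HasGradientAt f gr p) :
    HasDerivAt (fun s : ℝ => f ((AffineMap.lineMap z w : ℝ →ᵃ[ℝ] E) s)) ⟪gr, w - z⟫ t := by
  have hf := hg.hasFDerivAt
  subst hp
  have := hf.comp_hasDerivAt t (lineMap_hasDerivAt' z w t)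
  simpa [Function.comp_def, InnerProductSpace.toDual_apply_apply] using this

lemma grad_first_order' {f : E → ℝ} (hconv : ConvexOn ℝ Set.univ f)
    {gr z : E} (hg : HasGradientAt f gr z) (w : E) :
    f z + ⟪gr, w - z⟫ ≤ f w := by
  set A : ℝ →ᵃ[ℝ] E := AffineMap.lineMap z w with hA
  have hφ : ConvexOn ℝ Set.univ (fun s : ℝ => f (A s)) := by
    simpa [Function.comp_def] using hconv.comp_affineMap A
  have hder : HasDerivAt (fun s : ℝ => f (A s)) ⟪gr, w - z⟫ 0 :=
    comp_lineMap_hasDerivAt' z w 0 (by simp [hA]) hg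
  have hsl := hφ.le_slope_of_hasDerivAt (Set.mem_univ 0) (Set.mem_univ 1) one_pos hder
  rw [slope_def_field] at hsl
  simp only [hA, AffineMap.lineMap_apply_one, AffineMap.lineMap_apply_zero] at hsl
  have : ⟪gr, w - z⟫ ≤ f w - f z := by
    simpa using hsl
  linarith

lemma inner_grad_le_lip' {X : Set E} (hX : Convex ℝ X) {f : E → ℝ} {L : ℝ}
    (hLip : ∀ a ∈ X, ∀ b ∈ X, |f a - f b| ≤ L * ‖a - b‖)
    {gr z : E} (hg : HasGradientAt f gr z) {y : E} (hz : z ∈ X) (hy : y ∈ X) :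
    ⟪gr, z - y⟫ ≤ L * ‖z - y‖ := by
  rcases eq_or_ne z y with rfl | hzy
  · simp
  set A : ℝ →ᵃ[ℝ] E := AffineMap.lineMap y z with hA
  have hder : HasDerivAt (fun s : ℝ => f (A s)) ⟪gr, z - y⟫ 1 :=
    comp_lineMap_hasDerivAt' y z 1 (by simp [hA]) hg
  have htend : Filter.Tendsto (slope (fun s : ℝ => f (A s)) 1)
      (nhdsWithin 1 (Set.Iio 1)) (nhds ⟪gr, z - y⟫) :=
    (hasDerivWithinAt_iff_tendsto_slope' Set.notMem_Iio_self).mp hder.hasDerivWithinAt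
  refine le_of_tendsto htend ?_
  filter_upwards [Ioo_mem_nhdsLT_of_mem (Set.mem_Ioc.mpr ⟨zero_lt_one, le_refl (1:ℝ)⟩)] with s hs
  have hs1 : (0:ℝ) < 1 - s := by linarith [hs.2]
  have hmem : A s ∈ X := by
    rw [hA, AffineMap.lineMap_apply_module]
    exact hX hy hz (by linarith [hs.2]) (le_of_lt hs.1) (by ring)
  have hAs : A s = s • (z - y) + y := by
    rw [hA, AffineMap.lineMap_apply_module']
  have hdist : z - A s = (1 - s) • (z - y) := by
    rw [hAs]; module
  have hls : f z - f (A s) ≤ L * ((1 - s) * ‖z - y‖) := by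
    have h := (le_abs_self _).trans (hLip z hz (A s) hmem)
    rwa [hdist, norm_smul, Real.norm_eq_abs, abs_of_nonneg hs1.le] at h
  rw [slope_comm, slope_def_field, div_le_iff₀ hs1]
  have hA1 : A 1 = z := by simp [hA]
  calc f (A 1) - f (A s) = f z - f (A s) := by rw [hA1]
    _ ≤ L * ((1-s) * ‖z - y‖) := hls
    _ = L * ‖z - y‖ * (1 - s) := by ring

end aux
/-- The network loss `ℓ̄_t(S_t, x) = (1/|S_t|) Σ_{v ∈ S_t} ℓ_t(x, v)`, equal to
`0` when `S_t = ∅` (note `1/0 = 0` in `ℝ`, implementing the convention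
`0/0 = 0`). -/
def netLoss {d : ℕ} {V : Type*} (ℓ : ℕ → EuclideanSpace ℝ (Fin d) → V → ℝ)
    (S : ℕ → Finset V) (t : ℕ) (z : EuclideanSpace ℝ (Fin d)) : ℝ :=
  (1 / ((S t).card : ℝ)) * ∑ v ∈ S t, ℓ t z v

theorem stmt16 {d : ℕ} (X : Set (EuclideanSpace ℝ (Fin d))) (hX : Convex ℝ X)
    {V : Type*} [Fintype V] [DecidableEq V] (T : ℕ) (hT : 0 < T)
    (ℓ : ℕ → EuclideanSpace ℝ (Fin d) → V → ℝ)
    (g : ℕ → EuclideanSpace ℝ (Fin d) → V → EuclideanSpace ℝ (Fin d))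
    (hconv : ∀ t, ∀ v : V, ConvexOn ℝ Set.univ (fun z => ℓ t z v))
    (hgrad : ∀ t, ∀ v : V, ∀ z, HasGradientAt (fun w => ℓ t w v) (g t z v) z)
    (L : ℝ)
    (hLip : ∀ t, ∀ v : V, ∀ z ∈ X, ∀ w ∈ X, |ℓ t z v - ℓ t w v| ≤ L * ‖z - w‖)
    (S : ℕ → Finset V)
    (x : ℕ → V → EuclideanSpace ℝ (Fin d)) (hx : ∀ t v, x t v ∈ X)
    (y : ℕ → EuclideanSpace ℝ (Fin d)) (hy : ∀ t, y t ∈ X)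
    (xstar : EuclideanSpace ℝ (Fin d)) (hxstar : xstar ∈ X)
    (hmin : ∀ z ∈ X, ∑ t ∈ Finset.Icc 1 T, netLoss ℓ S t xstar
      ≤ ∑ t ∈ Finset.Icc 1 T, netLoss ℓ S t z) :
    ∑ t ∈ Finset.Icc 1 T, (1 / ((S t).card : ℝ)) * ∑ v ∈ S t, netLoss ℓ S t (x t v)
      - ∑ t ∈ Finset.Icc 1 T, netLoss ℓ S t xstar
    ≤ 3 * ∑ t ∈ Finset.Icc 1 T, ∑ u : V,
        ((if u ∈ S t then (1 : ℝ) else 0) / ((S t).card : ℝ)) * (L * ‖x t u - y t‖)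
      + ∑ t ∈ Finset.Icc 1 T, ∑ v : V,
        ((if v ∈ S t then (1 : ℝ) else 0) / ((S t).card : ℝ))
          * ⟪g t (x t v) v, y t - xstar⟫ := by
  have key : ∀ t ∈ Finset.Icc 1 T,
      (1 / ((S t).card : ℝ)) * (∑ v ∈ S t, netLoss ℓ S t (x t v)) - netLoss ℓ S t xstar
      ≤ 3 * (∑ u ∈ S t, (1 / ((S t).card : ℝ)) * (L * ‖x t u - y t‖))
        + ∑ v ∈ S t, (1 / ((S t).card : ℝ)) * ⟪g t (x t v) v, y t - xstar⟫ := by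
    intro t _
    rcases (S t).eq_empty_or_nonempty with he | hne
    · simp [he, netLoss]
    · have hn0 : 0 < (S t).card := Finset.card_pos.mpr hne
      set n : ℝ := ((S t).card : ℝ) with hn'
      have hn : (0:ℝ) < n := by rw [hn']; exact_mod_cast hn0
      have hinv : (0:ℝ) ≤ 1/n := by positivity
      have hLipNet : ∀ z ∈ X, ∀ w ∈ X, netLoss ℓ S t z - netLoss ℓ S t w ≤ L * ‖z - w‖ := by
        intro z hz w hw
        have hb : ∑ v ∈ S t, (ℓ t z v - ℓ t w v) ≤ n * (L * ‖z - w‖) := by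
          have : ∑ v ∈ S t, (ℓ t z v - ℓ t w v) ≤ ∑ _v ∈ S t, L * ‖z - w‖ :=
            Finset.sum_le_sum fun v _ => (le_abs_self _).trans (hLip t v z hz w hw)
          rwa [Finset.sum_const, nsmul_eq_mul, ← hn'] at this
        have heq : netLoss ℓ S t z - netLoss ℓ S t w
            = (1/n) * ∑ v ∈ S t, (ℓ t z v - ℓ t w v) := by
          rw [Finset.sum_sub_distrib, mul_sub]; rfl
        rw [heq]
        calc (1/n) * ∑ v ∈ S t, (ℓ t z v - ℓ t w v)
            ≤ (1/n) * (n * (L * ‖z - w‖)) := mul_le_mul_of_nonneg_left hb hinv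
          _ = L * ‖z - w‖ := by field_simp
      set CC := ∑ v ∈ S t, (1/n) * (L * ‖x t v - y t‖) with hCC
      set DD := ∑ v ∈ S t, (1/n) * ⟪g t (x t v) v, y t - xstar⟫ with hDD
      have hA : (1/n) * ∑ v ∈ S t, netLoss ℓ S t (x t v) ≤ CC + netLoss ℓ S t (y t) := by
        have h1 : ∑ v ∈ S t, netLoss ℓ S t (x t v)
            ≤ ∑ v ∈ S t, (L * ‖x t v - y t‖ + netLoss ℓ S t (y t)) :=
          Finset.sum_le_sum fun v _ => by
            have := hLipNet (x t v) (hx t v) (y t) (hy t); linarith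
        calc (1/n) * ∑ v ∈ S t, netLoss ℓ S t (x t v)
            ≤ (1/n) * ∑ v ∈ S t, (L * ‖x t v - y t‖ + netLoss ℓ S t (y t)) :=
              mul_le_mul_of_nonneg_left h1 hinv
          _ = (1/n) * (∑ v ∈ S t, (L * ‖x t v - y t‖)) + (1/n) * (n * netLoss ℓ S t (y t)) := by
              rw [Finset.sum_add_distrib, Finset.sum_const, nsmul_eq_mul, ← hn', mul_add]
          _ = CC + netLoss ℓ S t (y t) := by
              rw [hCC, Finset.mul_sum]
              congr 1
              field_simp
      have hper : ∀ v ∈ S t, ℓ t (y t) v - ℓ t xstar v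
          ≤ 2 * (L * ‖x t v - y t‖) + ⟪g t (x t v) v, y t - xstar⟫ := by
        intro v _
        have ha : ⟪g t (x t v) v, x t v - y t⟫ ≤ L * ‖x t v - y t‖ :=
          inner_grad_le_lip' hX (hLip t v) (hgrad t v (x t v)) (hx t v) (hy t)
        have hb := grad_first_order' (hconv t v) (hgrad t v (x t v)) xstar
        have hc : ℓ t (y t) v - ℓ t (x t v) v ≤ L * ‖x t v - y t‖ := by
          have h := (le_abs_self _).trans (hLip t v (y t) (hy t) (x t v) (hx t v))
          rwa [norm_sub_rev] at h
        have hsplit : ⟪g t (x t v) v, x t v - y t⟫ + ⟪g t (x t v) v, y t - xstar⟫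
            + ⟪g t (x t v) v, xstar - x t v⟫ = 0 := by
          rw [← inner_add_right, ← inner_add_right]
          have h0 : (x t v - y t) + (y t - xstar) + (xstar - x t v) = 0 := by abel
          rw [h0, inner_zero_right]
        linarith
      have hB : netLoss ℓ S t (y t) - netLoss ℓ S t xstar ≤ 2 * CC + DD := by
        have h2 : netLoss ℓ S t (y t) - netLoss ℓ S t xstar
            = (1/n) * ∑ v ∈ S t, (ℓ t (y t) v - ℓ t xstar v) := by
          rw [Finset.sum_sub_distrib, mul_sub]; rfl
        rw [h2]
        calc (1/n) * ∑ v ∈ S t, (ℓ t (y t) v - ℓ t xstar v)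
            ≤ (1/n) * ∑ v ∈ S t, (2 * (L * ‖x t v - y t‖) + ⟪g t (x t v) v, y t - xstar⟫) :=
              mul_le_mul_of_nonneg_left (Finset.sum_le_sum hper) hinv
          _ = 2 * CC + DD := by
              rw [hCC, hDD, Finset.mul_sum, Finset.mul_sum, ← Finset.sum_add_distrib]
              exact Finset.sum_congr rfl fun v _ => by ring
      linarith
  have conv : ∀ (t : ℕ) (c : V → ℝ),
      ∑ u : V, ((if u ∈ S t then (1:ℝ) else 0) / ((S t).card : ℝ)) * c u
        = ∑ u ∈ S t, (1 / ((S t).card : ℝ)) * c u := by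
    intro t c
    have h : ∀ u : V, ((if u ∈ S t then (1:ℝ) else 0) / ((S t).card : ℝ)) * c u
        = if u ∈ S t then (1 / ((S t).card : ℝ)) * c u else 0 := by
      intro u; by_cases h : u ∈ S t <;> simp [h]
    simp_rw [h]
    rw [Finset.sum_ite_mem, Finset.univ_inter]
  have e1 : ∑ t ∈ Finset.Icc 1 T, ∑ u : V,
        ((if u ∈ S t then (1:ℝ) else 0) / ((S t).card : ℝ)) * (L * ‖x t u - y t‖)
      = ∑ t ∈ Finset.Icc 1 T, ∑ u ∈ S t, (1/((S t).card : ℝ)) * (L * ‖x t u - y t‖) :=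
    Finset.sum_congr rfl fun t _ => conv t _
  have e2 : ∑ t ∈ Finset.Icc 1 T, ∑ v : V,
        ((if v ∈ S t then (1:ℝ) else 0) / ((S t).card : ℝ)) * ⟪g t (x t v) v, y t - xstar⟫
      = ∑ t ∈ Finset.Icc 1 T, ∑ v ∈ S t, (1/((S t).card : ℝ)) * ⟪g t (x t v) v, y t - xstar⟫ :=
    Finset.sum_congr rfl fun t _ => conv t _
  rw [e1, e2, Finset.mul_sum, ← Finset.sum_add_distrib, ← Finset.sum_sub_distrib]
  exact Finset.sum_le_sum key

end
end

section
/- Let W_1, …, W_T be independent (not necessarily identically distributed) random N×N real matrices, each almost surely symmetric and doubly stochastic, and suppose there is a real B ∈ [0,1] such that ‖E[W_k²] − (1/N)𝟏𝟏ᵀ‖_op ≤ B for every k ∈ {1,…,T}. Then for every vertex index v ∈ {1,…,N} and all integers s < t in {1,…,T}, E[‖W_t ⋯ W_{s+1} e_v − (1/N)𝟏‖₂] ≤ B^{(t−s)/2}. -/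
open MeasureTheory ProbabilityTheory Matrix

noncomputable section

instance matrixMeasurableSpace (N : ℕ) : MeasurableSpace (Matrix (Fin N) (Fin N) ℝ) :=
  inferInstanceAs (MeasurableSpace (Fin N → Fin N → ℝ))

/-- A matrix is doubly stochastic if it has nonnegative entries and all row and
column sums equal 1. -/
def IsDoublyStochastic {N : ℕ} (M : Matrix (Fin N) (Fin N) ℝ) : Prop :=
  (∀ i j, 0 ≤ M i j) ∧ (∀ i, ∑ j, M i j = 1) ∧ (∀ j, ∑ i, M i j = 1)

/-- Euclidean norm of a vector of ℝ^N. -/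
def eNorm {N : ℕ} (x : Fin N → ℝ) : ℝ := Real.sqrt (∑ i, x i ^ 2)

/-- Operator (spectral) norm of a real N×N matrix. -/
def opNorm {N : ℕ} (M : Matrix (Fin N) (Fin N) ℝ) : ℝ :=
  ‖Matrix.toEuclideanCLM (𝕜 := ℝ) M‖

/-- The product W_t * W_{t-1} * ⋯ * W_{s+1}. -/
def prodW {N : ℕ} (W : ℕ → Matrix (Fin N) (Fin N) ℝ) (s t : ℕ) :
    Matrix (Fin N) (Fin N) ℝ :=
  ((List.range (t - s)).map (fun k => W (t - k))).prod

/-- The N×N all-ones matrix. -/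
def onesMatrix (N : ℕ) : Matrix (Fin N) (Fin N) ℝ := Matrix.of fun _ _ => (1 : ℝ)

/-!
Let `u = e_v - 𝟏/N` and `x_r = W_r ⋯ W_{s+1} u`. Doubly stochastic matrices fix `𝟏` and preserve
coordinate sums, so `x_t` is the vector in the statement and every `x_r` is orthogonal to `𝟏`.
By symmetry `‖x_{r+1}‖² = x_rᵀ W_{r+1}² x_r`; as `x_r` is a function of `W_{s+1}, …, W_r`, it is
independent of `W_{r+1}`, so the expectation equals `E[x_rᵀ E[W_{r+1}²] x_r]`. On `𝟏^⊥` the matrix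
`E[W²]` acts as `E[W²] - 𝟏𝟏ᵀ/N`, whence `E‖x_{r+1}‖² ≤ B E‖x_r‖²`. Starting from
`‖u‖² = 1 - 1/N ≤ 1`, this gives `E‖x_t‖² ≤ B^(t-s)`, and Jensen's inequality for the square root
gives the claim.
-/

instance (N : ℕ) : BorelSpace (Matrix (Fin N) (Fin N) ℝ) :=
  inferInstanceAs (BorelSpace (Fin N → Fin N → ℝ))

instance (N : ℕ) : SecondCountableTopology (Matrix (Fin N) (Fin N) ℝ) :=
  inferInstanceAs (SecondCountableTopology (Fin N → Fin N → ℝ))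

section Matrix

variable {N : ℕ}

lemma eNorm_eq_sqrt_dotProduct (x : Fin N → ℝ) : eNorm x = √(x ⬝ᵥ x) := by
  simp [eNorm, dotProduct, sq]

lemma isDoublyStochastic_iff_mem {M : Matrix (Fin N) (Fin N) ℝ} :
    IsDoublyStochastic M ↔ M ∈ doublyStochastic ℝ (Fin N) :=
  mem_doublyStochastic_iff_sum.symm

lemma abs_mulVec_apply_le_of_mem_doublyStochastic {M : Matrix (Fin N) (Fin N) ℝ}
    (hM : M ∈ doublyStochastic ℝ (Fin N)) (u : Fin N → ℝ) (i : Fin N) :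
    |(M *ᵥ u) i| ≤ ∑ j, |u j| :=
  calc |∑ j, M i j * u j| ≤ ∑ j, |M i j * u j| := Finset.abs_sum_le_sum_abs _ _
    _ ≤ ∑ j, |u j| := Finset.sum_le_sum fun j _ => by
      rw [abs_mul, abs_of_nonneg (nonneg_of_mem_doublyStochastic hM)]
      exact mul_le_of_le_one_left (abs_nonneg _) (le_one_of_mem_doublyStochastic hM)

lemma mulVec_const_of_mem_doublyStochastic {M : Matrix (Fin N) (Fin N) ℝ}
    (hM : M ∈ doublyStochastic ℝ (Fin N)) (c : ℝ) : (M *ᵥ fun _ => c) = fun _ => c := by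
  have hc : (fun _ => c : Fin N → ℝ) = c • 1 := by ext; simp
  rw [hc, mulVec_smul, mulVec_one_of_mem_doublyStochastic hM]

lemma dotProduct_mulVec_eq_sum (A : Matrix (Fin N) (Fin N) ℝ) (x : Fin N → ℝ) :
    x ⬝ᵥ (A *ᵥ x) = ∑ i, ∑ j, x i * x j * A i j := by
  simp only [dotProduct, mulVec, Finset.mul_sum]
  exact Finset.sum_congr rfl fun i _ => Finset.sum_congr rfl fun j _ => by ring

lemma dotProduct_mulVec_le_opNorm_mul (M : Matrix (Fin N) (Fin N) ℝ) (x : Fin N → ℝ) :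
    x ⬝ᵥ (M *ᵥ x) ≤ opNorm M * (x ⬝ᵥ x) := by
  set y : EuclideanSpace ℝ (Fin N) := WithLp.toLp 2 x
  calc x ⬝ᵥ (M *ᵥ x) = inner ℝ (toEuclideanCLM (𝕜 := ℝ) M y) y := by
        rw [toEuclideanCLM_toLp, EuclideanSpace.inner_toLp_toLp, star_trivial]
    _ ≤ ‖toEuclideanCLM (𝕜 := ℝ) M y‖ * ‖y‖ := real_inner_le_norm _ _
    _ ≤ opNorm M * ‖y‖ * ‖y‖ := by gcongr; exact (toEuclideanCLM (𝕜 := ℝ) M).le_opNorm y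
    _ = opNorm M * (x ⬝ᵥ x) := by
        rw [mul_assoc, ← real_inner_self_eq_norm_mul_norm, EuclideanSpace.inner_toLp_toLp,
          star_trivial]

lemma onesMatrix_mulVec (x : Fin N → ℝ) : onesMatrix N *ᵥ x = fun _ => ∑ i, x i := by
  ext; simp [onesMatrix, mulVec, dotProduct]

lemma dotProduct_mulVec_le_of_sum_eq_zero (A : Matrix (Fin N) (Fin N) ℝ) (c : ℝ)
    {x : Fin N → ℝ} (hx : ∑ i, x i = 0) :
    x ⬝ᵥ (A *ᵥ x) ≤ opNorm (A - c • onesMatrix N) * (x ⬝ᵥ x) := by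
  have hA : (A - c • onesMatrix N) *ᵥ x = A *ᵥ x := by
    ext i
    simp [sub_mulVec, smul_mulVec, onesMatrix_mulVec, hx]
  simpa [hA] using dotProduct_mulVec_le_opNorm_mul (A - c • onesMatrix N) x

def centeredSingle (v : Fin N) : Fin N → ℝ := Pi.single v 1 - fun _ => 1 / (N : ℝ)

lemma sum_centeredSingle (v : Fin N) : ∑ i, centeredSingle v i = 0 := by
  have hN : (N : ℝ) ≠ 0 := Nat.cast_ne_zero.2 v.pos.ne'
  simp [centeredSingle, Finset.sum_sub_distrib, hN]

lemma centeredSingle_dotProduct_self_le_one (v : Fin N) :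
    centeredSingle v ⬝ᵥ centeredSingle v ≤ 1 := by
  have h : centeredSingle v ⬝ᵥ centeredSingle v =
      centeredSingle v v - 1 / N * ∑ i, centeredSingle v i := by
    nth_rewrite 2 [centeredSingle]
    rw [dotProduct_sub, dotProduct_single, mul_one, Finset.mul_sum]
    simp [dotProduct, mul_comm]
  rw [h, sum_centeredSingle]
  simp [centeredSingle]

lemma mulVec_centeredSingle_of_mem_doublyStochastic {M : Matrix (Fin N) (Fin N) ℝ}
    (hM : M ∈ doublyStochastic ℝ (Fin N)) (v : Fin N) :
    M *ᵥ centeredSingle v = fun i => (M *ᵥ Pi.single v 1) i - 1 / N := by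
  rw [centeredSingle, mulVec_sub, mulVec_const_of_mem_doublyStochastic hM]
  rfl

end Matrix

section prodW

variable {N : ℕ}

lemma prodW_of_le (W : ℕ → Matrix (Fin N) (Fin N) ℝ) {s t : ℕ} (h : t ≤ s) :
    prodW W s t = 1 := by
  simp [prodW, Nat.sub_eq_zero_of_le h]

lemma prodW_succ (W : ℕ → Matrix (Fin N) (Fin N) ℝ) {s r : ℕ} (h : s ≤ r) :
    prodW W s (r + 1) = W (r + 1) * prodW W s r := by
  rw [prodW, prodW, show r + 1 - s = r - s + 1 by omega, List.range_succ_eq_map]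
  simp only [List.map_cons, List.map_map, List.prod_cons, Nat.sub_zero]
  congr 2
  exact List.map_congr_left fun k _ => by simp only [Function.comp_apply]; congr 1; omega

lemma prodW_mem (W : ℕ → Matrix (Fin N) (Fin N) ℝ) {S : Submonoid (Matrix (Fin N) (Fin N) ℝ)}
    {s t : ℕ} (h : ∀ k, s < k → k ≤ t → W k ∈ S) : prodW W s t ∈ S :=
  Submonoid.list_prod_mem _ <| by
    simp only [List.mem_map, List.mem_range]
    rintro _ ⟨k, hk, rfl⟩
    exact h _ (by omega) (by omega)

lemma measurable_prodW {Ω : Type*} {m : MeasurableSpace Ω} (W : ℕ → Ω → Matrix (Fin N) (Fin N) ℝ)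
    {s t : ℕ} (h : ∀ k, s < k → k ≤ t → Measurable (W k)) :
    Measurable fun ω => prodW (fun k => W k ω) s t := by
  have hW : ∀ ω, prodW (fun k => W k ω) s t =
      ((List.range (t - s)).map fun k => W (t - k)).prod ω :=
    fun ω => by rw [Pi.list_prod_apply, List.map_map]; rfl
  simp_rw [hW]
  refine List.measurable_prod _ ?_
  simp only [List.mem_map, List.mem_range]
  rintro _ ⟨k, hk, rfl⟩
  exact h _ (by omega) (by omega)

end prodW

section Probability

variable {N : ℕ} {Ω : Type*} [MeasurableSpace Ω] {μ : Measure Ω}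

lemma integral_sqrt_le_sqrt_integral [IsProbabilityMeasure μ] {f : Ω → ℝ}
    (hf : Integrable f μ) (hf0 : ∀ᵐ ω ∂μ, 0 ≤ f ω) :
    ∫ ω, √(f ω) ∂μ ≤ √(∫ ω, f ω ∂μ) := by
  have hsqrt : MemLp (fun ω => √(f ω)) 2 μ :=
    (memLp_two_iff_integrable_sq hf.1.aemeasurable.sqrt.aestronglyMeasurable).2 <|
      hf.congr (hf0.mono fun ω h => (Real.sq_sqrt h).symm)
  exact Real.strictConcaveOn_sqrt.concaveOn.le_map_integral Real.continuous_sqrt.continuousOn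
    isClosed_Ici hf0 hf (hsqrt.integrable one_le_two)

lemma integrable_apply_of_mem_doublyStochastic [IsFiniteMeasure μ]
    {M : Ω → Matrix (Fin N) (Fin N) ℝ} (hM : Measurable M)
    (hds : ∀ᵐ ω ∂μ, M ω ∈ doublyStochastic ℝ (Fin N)) (i j : Fin N) :
    Integrable (fun ω => M ω i j) μ :=
  Integrable.of_bound (hM.eval.eval).aestronglyMeasurable 1 <| hds.mono fun ω hω => by
    rw [Real.norm_eq_abs, abs_of_nonneg (nonneg_of_mem_doublyStochastic hω)]
    exact le_one_of_mem_doublyStochastic hω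

lemma integrable_mulVec_mul_mulVec_of_mem_doublyStochastic [IsFiniteMeasure μ]
    {M : Ω → Matrix (Fin N) (Fin N) ℝ} (hM : Measurable M)
    (hds : ∀ᵐ ω ∂μ, M ω ∈ doublyStochastic ℝ (Fin N)) (u : Fin N → ℝ) (i j : Fin N) :
    Integrable (fun ω => (M ω *ᵥ u) i * (M ω *ᵥ u) j) μ := by
  have hMu : Measurable fun ω => M ω *ᵥ u :=
    (continuous_id.matrix_mulVec continuous_const).measurable.comp hM
  refine Integrable.of_bound ((hMu.eval.mul hMu.eval).aestronglyMeasurable) ((∑ k, |u k|) ^ 2) <|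
    hds.mono fun ω hω => ?_
  rw [Real.norm_eq_abs, abs_mul, sq]
  exact mul_le_mul (abs_mulVec_apply_le_of_mem_doublyStochastic hω u i)
    (abs_mulVec_apply_le_of_mem_doublyStochastic hω u j) (abs_nonneg _)
    (Finset.sum_nonneg fun k _ => abs_nonneg _)

lemma integrable_dotProduct_mulVec {x : Ω → Fin N → ℝ}
    (hx : ∀ i j, Integrable (fun ω => x ω i * x ω j) μ) (A : Matrix (Fin N) (Fin N) ℝ) :
    Integrable (fun ω => x ω ⬝ᵥ (A *ᵥ x ω)) μ := by
  simp_rw [dotProduct_mulVec_eq_sum]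
  exact integrable_finsetSum _ fun i _ => integrable_finsetSum _ fun j _ => (hx i j).mul_const _

lemma integral_dotProduct_mulVec_of_indepFun {x : Ω → Fin N → ℝ}
    {M : Ω → Matrix (Fin N) (Fin N) ℝ} (hxM : IndepFun x M μ)
    (hx : ∀ i j, Integrable (fun ω => x ω i * x ω j) μ)
    (hM : ∀ i j, Integrable (fun ω => M ω i j) μ) :
    ∫ ω, x ω ⬝ᵥ (M ω *ᵥ x ω) ∂μ = ∫ ω, x ω ⬝ᵥ (matExp μ M *ᵥ x ω) ∂μ := by
  have hind : ∀ i j, IndepFun (fun ω => x ω i * x ω j) (fun ω => M ω i j) μ := fun i j =>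
    hxM.comp (φ := fun y : Fin N → ℝ => y i * y j) (ψ := fun A : Matrix (Fin N) (Fin N) ℝ => A i j)
      (by fun_prop) (by fun_prop)
  have hxMx : ∀ i j, Integrable (fun ω => x ω i * x ω j * M ω i j) μ := fun i j =>
    (hind i j).integrable_mul (hx i j) (hM i j)
  have hxAx : ∀ i j, Integrable (fun ω => x ω i * x ω j * matExp μ M i j) μ := fun i j =>
    (hx i j).mul_const _
  simp_rw [dotProduct_mulVec_eq_sum]
  rw [integral_finsetSum _ fun i _ => integrable_finsetSum _ fun j _ => hxMx i j,
    integral_finsetSum (f := fun i ω => ∑ j, x ω i * x ω j * matExp μ M i j) _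
      fun i _ => integrable_finsetSum _ fun j _ => hxAx i j]
  refine Finset.sum_congr rfl fun i _ => ?_
  rw [integral_finsetSum _ fun j _ => hxMx i j,
    integral_finsetSum (f := fun j ω => x ω i * x ω j * matExp μ M i j) _ fun j _ => hxAx i j]
  refine Finset.sum_congr rfl fun j _ => ?_
  rw [(hind i j).integral_fun_mul_eq_mul_integral (hx i j).1 (hM i j).1, integral_mul_const]
  rfl

lemma integral_mulVec_dotProduct_mulVec_le {x : Ω → Fin N → ℝ}
    {W : Ω → Matrix (Fin N) (Fin N) ℝ} (hxW : IndepFun x W μ)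
    (hx : ∀ i j, Integrable (fun ω => x ω i * x ω j) μ)
    (hWW : ∀ i j, Integrable (fun ω => (W ω * W ω) i j) μ)
    (hsymm : ∀ᵐ ω ∂μ, (W ω)ᵀ = W ω) (hsum : ∀ᵐ ω ∂μ, ∑ i, x ω i = 0) (c : ℝ) :
    ∫ ω, (W ω *ᵥ x ω) ⬝ᵥ (W ω *ᵥ x ω) ∂μ ≤
      opNorm (matExp μ (fun ω => W ω * W ω) - c • onesMatrix N) * ∫ ω, x ω ⬝ᵥ x ω ∂μ := by
  have hxWW : IndepFun x (fun ω => W ω * W ω) μ :=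
    hxW.comp measurable_id (measurable_id.mul measurable_id)
  calc ∫ ω, (W ω *ᵥ x ω) ⬝ᵥ (W ω *ᵥ x ω) ∂μ = ∫ ω, x ω ⬝ᵥ ((W ω * W ω) *ᵥ x ω) ∂μ :=
        integral_congr_ae <| hsymm.mono fun ω h => by
          dsimp only
          conv_rhs => rw [← mulVec_mulVec, dotProduct_mulVec, ← mulVec_transpose, h]
    _ = ∫ ω, x ω ⬝ᵥ (matExp μ (fun ω => W ω * W ω) *ᵥ x ω) ∂μ :=
        integral_dotProduct_mulVec_of_indepFun hxWW hx hWW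
    _ ≤ ∫ ω, opNorm (matExp μ (fun ω => W ω * W ω) - c • onesMatrix N) * (x ω ⬝ᵥ x ω) ∂μ := by
        refine integral_mono_ae (integrable_dotProduct_mulVec hx _) ?_ <|
          hsum.mono fun ω h => dotProduct_mulVec_le_of_sum_eq_zero _ c h
        simpa using (integrable_dotProduct_mulVec hx 1).const_mul
          (opNorm (matExp μ (fun ω => W ω * W ω) - c • onesMatrix N))
    _ = _ := integral_const_mul _ _

end Probability

section RandomProduct

variable {N T : ℕ} {Ω : Type*} [MeasurableSpace Ω] {μ : Measure Ω}

lemma ae_prodW_mem_doublyStochastic (W : ℕ → Ω → Matrix (Fin N) (Fin N) ℝ)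
    (hds : ∀ k ∈ Finset.Icc 1 T, ∀ᵐ ω ∂μ, IsDoublyStochastic (W k ω)) (s : ℕ) {t : ℕ}
    (ht : t ≤ T) : ∀ᵐ ω ∂μ, prodW (fun k => W k ω) s t ∈ doublyStochastic ℝ (Fin N) := by
  filter_upwards [(Filter.eventually_all_finset _).2 hds] with ω hω
  exact prodW_mem _ fun k hsk hkt =>
    isDoublyStochastic_iff_mem.1 (hω k (Finset.mem_Icc.2 ⟨by omega, by omega⟩))

lemma indepFun_prodW (W : ℕ → Ω → Matrix (Fin N) (Fin N) ℝ)
    (hmeas : ∀ k ∈ Finset.Icc 1 T, Measurable (W k))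
    (hindep : iIndepFun (fun k : {k : ℕ // k ∈ Finset.Icc 1 T} => W k.1) μ)
    (s : ℕ) {r : ℕ} (hr : r + 1 ≤ T) :
    IndepFun (fun ω => prodW (fun k => W k ω) s r) (W (r + 1)) μ := by
  let m : {k : ℕ // k ∈ Finset.Icc 1 T} → MeasurableSpace Ω := fun k =>
    MeasurableSpace.comap (W k.1) inferInstance
  let past : Set {k : ℕ // k ∈ Finset.Icc 1 T} := {k | k.1 ≤ r}
  let next : {k : ℕ // k ∈ Finset.Icc 1 T} := ⟨r + 1, Finset.mem_Icc.2 ⟨by omega, hr⟩⟩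
  have hm : ∀ k, m k ≤ ‹MeasurableSpace Ω› := fun k => (hmeas k.1 k.2).comap_le
  have hsep := indep_iSup_of_disjoint hm ((iIndepFun_iff_iIndep _ _ μ).1 hindep)
    (Set.disjoint_singleton_right.2 fun h => Nat.not_succ_le_self r h : Disjoint past {next})
  have hpast : Measurable[⨆ k ∈ past, m k] fun ω => prodW (fun k => W k ω) s r :=
    measurable_prodW W fun k hsk hkr => measurable_iff_comap_le.2 <|
      le_iSup₂ (f := fun k (_ : k ∈ past) => m k)
        ⟨k, Finset.mem_Icc.2 ⟨by omega, by omega⟩⟩ (show k ≤ r from hkr)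
  rw [IndepFun_iff_Indep]
  exact indep_of_indep_of_le_left (indep_of_indep_of_le_right hsep
    (le_iSup₂ (f := fun k (_ : k ∈ ({next} : Set _)) => m k) next rfl)) hpast.comap_le

lemma integral_prodW_mulVec_dotProduct_le [IsProbabilityMeasure μ]
    (W : ℕ → Ω → Matrix (Fin N) (Fin N) ℝ)
    (hmeas : ∀ k ∈ Finset.Icc 1 T, Measurable (W k))
    (hindep : iIndepFun (fun k : {k : ℕ // k ∈ Finset.Icc 1 T} => W k.1) μ)
    (hsymm : ∀ k ∈ Finset.Icc 1 T, ∀ᵐ ω ∂μ, (W k ω)ᵀ = W k ω)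
    (hds : ∀ k ∈ Finset.Icc 1 T, ∀ᵐ ω ∂μ, IsDoublyStochastic (W k ω))
    {B : ℝ} (hB0 : 0 ≤ B)
    (hBbound : ∀ k ∈ Finset.Icc 1 T,
      opNorm (matExp μ (fun ω => W k ω * W k ω) - (1 / (N : ℝ)) • onesMatrix N) ≤ B)
    {u : Fin N → ℝ} (hu : ∑ i, u i = 0) (s : ℕ) {t : ℕ} (ht : t ≤ T) :
    ∫ ω, (prodW (fun k => W k ω) s t *ᵥ u) ⬝ᵥ (prodW (fun k => W k ω) s t *ᵥ u) ∂μ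
      ≤ B ^ (t - s) * (u ⬝ᵥ u) := by
  have hbase : ∀ t ≤ s, ∫ ω, (prodW (fun k => W k ω) s t *ᵥ u) ⬝ᵥ
      (prodW (fun k => W k ω) s t *ᵥ u) ∂μ ≤ B ^ (t - s) * (u ⬝ᵥ u) := fun t h => by
    simp [prodW_of_le _ h, Nat.sub_eq_zero_of_le h]
  induction t with
  | zero => exact hbase 0 (Nat.zero_le s)
  | succ r ih =>
    rcases Nat.lt_or_ge r s with hrs | hsr
    · exact hbase _ hrs
    have hr : r + 1 ∈ Finset.Icc 1 T := Finset.mem_Icc.2 ⟨by omega, ht⟩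
    have hP := ae_prodW_mem_doublyStochastic W hds s (Nat.le_of_succ_le ht)
    have hPmeas : Measurable fun ω => prodW (fun k => W k ω) s r :=
      measurable_prodW W fun k _ hkr => hmeas k (Finset.mem_Icc.2 ⟨by omega, by omega⟩)
    have hWmeas := hmeas _ hr
    have hWW : ∀ᵐ ω ∂μ, W (r + 1) ω * W (r + 1) ω ∈ doublyStochastic ℝ (Fin N) :=
      (hds _ hr).mono fun ω h => mul_mem (isDoublyStochastic_iff_mem.1 h)
        (isDoublyStochastic_iff_mem.1 h)
    simp only [prodW_succ _ hsr, ← mulVec_mulVec]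
    calc _ ≤ opNorm (matExp μ (fun ω => W (r + 1) ω * W (r + 1) ω) - (1 / (N : ℝ)) • onesMatrix N)
          * ∫ ω, (prodW (fun k => W k ω) s r *ᵥ u) ⬝ᵥ (prodW (fun k => W k ω) s r *ᵥ u) ∂μ :=
        integral_mulVec_dotProduct_mulVec_le
          ((indepFun_prodW W hmeas hindep s ht).comp
            (continuous_id.matrix_mulVec continuous_const).measurable measurable_id)
          (integrable_mulVec_mul_mulVec_of_mem_doublyStochastic hPmeas hP u)
          (integrable_apply_of_mem_doublyStochastic (hWmeas.mul hWmeas) hWW)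
          (hsymm _ hr)
          (hP.mono fun ω h => (sum_mulVec_of_mem_doublyStochastic h).trans hu) _
      _ ≤ B * (B ^ (r - s) * (u ⬝ᵥ u)) :=
        mul_le_mul (hBbound _ hr) (ih (Nat.le_of_succ_le ht))
          (integral_nonneg fun ω => dotProduct_self_star_nonneg _) hB0
      _ = B ^ (r + 1 - s) * (u ⬝ᵥ u) := by rw [Nat.succ_sub hsr, pow_succ]; ring

end RandomProduct

theorem stmt19_general {N T : ℕ} {Ω : Type*} [MeasurableSpace Ω]
    (μ : Measure Ω) [IsProbabilityMeasure μ]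
    (W : ℕ → Ω → Matrix (Fin N) (Fin N) ℝ)
    (hmeas : ∀ k ∈ Finset.Icc 1 T, Measurable (W k))
    (hindep : iIndepFun
      (fun k : {k : ℕ // k ∈ Finset.Icc 1 T} => W k.1) μ)
    (hsymm : ∀ k ∈ Finset.Icc 1 T, ∀ᵐ ω ∂μ, (W k ω)ᵀ = W k ω)
    (hds : ∀ k ∈ Finset.Icc 1 T, ∀ᵐ ω ∂μ, IsDoublyStochastic (W k ω))
    (B : ℝ) (hB0 : 0 ≤ B)
    (hBbound : ∀ k ∈ Finset.Icc 1 T,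
      opNorm (matExp μ (fun ω => W k ω * W k ω) - (1 / (N : ℝ)) • onesMatrix N) ≤ B)
    (v : Fin N) (s t : ℕ) (ht : t ≤ T) :
    ∫ ω, eNorm (fun i =>
        (prodW (fun k => W k ω) s t).mulVec (Pi.single v 1) i - 1 / N) ∂μ
      ≤ B ^ (((t - s : ℕ) : ℝ) / 2) := by
  set P := fun ω => prodW (fun k => W k ω) s t
  set u := centeredSingle v
  have hP := ae_prodW_mem_doublyStochastic W hds s ht
  have hPmeas : Measurable P :=
    measurable_prodW W fun k _ hkt => hmeas k (Finset.mem_Icc.2 ⟨by omega, by omega⟩)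
  calc ∫ ω, eNorm (fun i => (P ω *ᵥ Pi.single v 1) i - 1 / N) ∂μ
      = ∫ ω, √((P ω *ᵥ u) ⬝ᵥ (P ω *ᵥ u)) ∂μ :=
        integral_congr_ae <| hP.mono fun ω h => by
          dsimp only
          rw [← mulVec_centeredSingle_of_mem_doublyStochastic h, eNorm_eq_sqrt_dotProduct]
    _ ≤ √(∫ ω, (P ω *ᵥ u) ⬝ᵥ (P ω *ᵥ u) ∂μ) := by
        refine integral_sqrt_le_sqrt_integral ?_
          (.of_forall fun ω => dotProduct_self_star_nonneg _)
        simpa using integrable_dotProduct_mulVec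
          (integrable_mulVec_mul_mulVec_of_mem_doublyStochastic hPmeas hP u) 1
    _ ≤ √(B ^ (t - s)) := Real.sqrt_le_sqrt <|
        (integral_prodW_mulVec_dotProduct_le W hmeas hindep hsymm hds hB0 hBbound
          (sum_centeredSingle v) s ht).trans
          (mul_le_of_le_one_right (pow_nonneg hB0 _) (centeredSingle_dotProduct_self_le_one v))
    _ = B ^ (((t - s : ℕ) : ℝ) / 2) := by
        rw [Real.sqrt_eq_rpow, ← Real.rpow_natCast, ← Real.rpow_mul hB0]
        ring_nf

theorem stmt19 {N T : ℕ} (hN : 0 < N) {Ω : Type*} [MeasurableSpace Ω]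
    (μ : Measure Ω) [IsProbabilityMeasure μ]
    (W : ℕ → Ω → Matrix (Fin N) (Fin N) ℝ)
    (hmeas : ∀ k ∈ Finset.Icc 1 T, Measurable (W k))
    (hindep : iIndepFun
      (fun k : {k : ℕ // k ∈ Finset.Icc 1 T} => W k.1) μ)
    (hsymm : ∀ k ∈ Finset.Icc 1 T, ∀ᵐ ω ∂μ, (W k ω)ᵀ = W k ω)
    (hds : ∀ k ∈ Finset.Icc 1 T, ∀ᵐ ω ∂μ, IsDoublyStochastic (W k ω))
    (B : ℝ) (hB0 : 0 ≤ B) (hB1 : B ≤ 1)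
    (hBbound : ∀ k ∈ Finset.Icc 1 T,
      opNorm (matExp μ (fun ω => W k ω * W k ω) - (1 / (N : ℝ)) • onesMatrix N) ≤ B)
    (v : Fin N) (s t : ℕ) (hs : 1 ≤ s) (hst : s < t) (ht : t ≤ T) :
    ∫ ω, eNorm (fun i =>
        (prodW (fun k => W k ω) s t).mulVec (Pi.single v 1) i - 1 / N) ∂μ
      ≤ B ^ (((t - s : ℕ) : ℝ) / 2) :=
  stmt19_general μ W hmeas hindep hsymm hds B hB0 hBbound v s t ht

end
end
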